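/- arXiv:2209.09051 — 6 statements merged into one kernel-verified Lean document; each statement's English description precedes it below -/
import Mathlib

section
/- Lemma 1: For every s ∈ {0,…,n−1} and every β ∈ F^*, the cyclic derivative descendant D(M_s, β) of the extended minimal cyclic code M_s is the extended cyclic code with exponent set cc(P(s)). In particular the exponent set of D(M_s, β) does not depend on β. -/
/-- Hamming weight of the `m`-bit binary expansion of `s`. -/
def wtm (m s : ℕ) : ℕ := ((Finset.range m).filter fun j => s.testBit j).card

/-- `Pset s`: the set of nonnegative integers whose binary expansion is
properly covered by that of `s`. -/
def Pset (s : ℕ) : Finset ℕ :=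
  (Finset.range (s + 1)).filter fun k => k ||| s = s ∧ k ≠ s

/-- The cyclotomic coset `C_s` modulo `n = 2^m - 1`. -/
def cycCoset (n m s : ℕ) : Finset ℕ := (Finset.range m).image fun j => 2 ^ j * s % n

/-- `cc S`: union of all cyclotomic cosets meeting `S`. -/
def ccSet (n m : ℕ) (S : Finset ℕ) : Finset ℕ := S.biUnion (cycCoset n m)

/-- `cr S`: the set of coset representatives (minimal elements of the cosets) of `S`. -/
def crSet (n m : ℕ) (S : Finset ℕ) : Finset ℕ :=
  (ccSet n m S).filter fun s => ∀ t ∈ cycCoset n m s, s ≤ t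

/-- `S` is an exponent set: a set of residues mod `n` closed under doubling mod `n`. -/
def IsExpSet (n : ℕ) (S : Finset ℕ) : Prop :=
  (∀ j ∈ S, j < n) ∧ ∀ j ∈ S, 2 * j % n ∈ S

/-- The extended cyclic code of length `2^m` with exponent set `S`. -/
def extCyclicCode {F : Type*} [Field F] (n : ℕ) (S : Finset ℕ) : Set (F → F) :=
  { c | ∃ A : ℕ → F, (∀ j ∈ S, A (2 * j % n) = A j ^ 2) ∧
      ∀ x : F, c x = ∑ j ∈ S, A j * x ^ j }

/-- The set of derivatives of the codewords of `C` in direction `β`. -/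
def derivSet {F : Type*} [Field F] (β : F) (C : Set (F → F)) : Set (F → F) :=
  { d | ∃ c ∈ C, d = fun x => c (x + β) - c x }

/-- Minimum Hamming distance (= minimum weight) of a code. -/
noncomputable def minDist {F : Type*} [Field F] [Fintype F] [DecidableEq F]
    (C : Set (F → F)) : ℕ :=
  sInf { w | ∃ c ∈ C, c ≠ (0 : F → F) ∧ hammingNorm c = w }

/-!
In characteristic 2, Lucas' theorem gives `(x + β) ^ j - x ^ j = ∑ β ^ (j - k) * x ^ k` over the
proper binary submasks `k` of `j`. Multiplication by 2 modulo `2 ^ m - 1` rotates binary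
expansions, so the proper submasks of the elements of `C_s` lie in `cc(P(s))`. A polynomial
function whose exponents lie in an exponent set belongs to the code iff it is `F₂`-valued (squaring
permutes the exponents), and derivatives of `F₂`-valued functions are `F₂`-valued; hence
`D(M_s, β) ⊆ C(cc(P(s)))`. Conversely, for `k ∈ P(s)` the coefficient of `x ^ k` in the derivative
of `x ↦ Tr(γ x ^ s)` is a polynomial in `γ` of degree `< 2 ^ m` whose coefficient of `γ` is
`β ^ (s - k) ≠ 0`; so some codeword of `D(M_s, β)` involves `x ^ k`, and every exponent set
containing the derivatives contains `k`, hence all of `cc(P(s))`.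
-/

open Finset

namespace Nat

theorem or_eq_right_iff_testBit {k j : ℕ} : k ||| j = j ↔ ∀ i, k.testBit i → j.testBit i := by
  constructor
  · intro h i hi
    rw [← h, testBit_or, hi, Bool.true_or]
  · intro h
    refine eq_of_testBit_eq fun i => ?_
    rw [testBit_or]
    cases hk : k.testBit i
    · rfl
    · rw [h i hk, Bool.true_or]

theorem or_eq_right_iff_mod_two_and_div_two {k j : ℕ} :
    k ||| j = j ↔ k % 2 ≤ j % 2 ∧ k / 2 ||| j / 2 = j / 2 := by
  simp only [or_eq_right_iff_testBit, testBit_div_two]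
  constructor
  · intro h
    refine ⟨?_, fun i => h (i + 1)⟩
    have := h 0
    simp only [testBit_zero, decide_eq_true_eq] at this
    omega
  · rintro ⟨h0, h⟩ (_ | i)
    · simp only [testBit_zero, decide_eq_true_eq]
      omega
    · exact h i

theorem choose_mod_two (j k : ℕ) : j.choose k % 2 = if k ||| j = j then 1 else 0 := by
  induction j using Nat.strong_induction_on generalizing k with
  | _ j ih =>
  rcases eq_or_ne j 0 with rfl | hj
  · cases k <;> simp
  rw [Choose.choose_modEq_choose_mod_mul_choose_div_nat (p := 2), Nat.mul_mod,
    ih (j / 2) (by omega)]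
  simp only [or_eq_right_iff_mod_two_and_div_two (k := k)]
  rcases mod_two_eq_zero_or_one j with h | h <;> rcases mod_two_eq_zero_or_one k with h' | h' <;>
    split_ifs <;> simp_all

end Nat

theorem add_pow_char_two {R : Type*} [CommSemiring R] [CharP R 2] (x y : R) (j : ℕ) :
    (x + y) ^ j = ∑ k ∈ range (j + 1) with k ||| j = j, x ^ k * y ^ (j - k) := by
  rw [add_pow, sum_filter]
  refine sum_congr rfl fun k _ => ?_
  rw [CharP.cast_eq_mod R 2, Nat.choose_mod_two]
  split_ifs <;> simp

theorem mem_Pset {s k : ℕ} : k ∈ Pset s ↔ k ||| s = s ∧ k ≠ s := by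
  simp only [Pset, mem_filter, mem_range, and_iff_right_iff_imp]
  exact fun h => Nat.lt_succ_of_le (h.1 ▸ Nat.left_le_or)

theorem lt_of_mem_Pset {s k : ℕ} (hk : k ∈ Pset s) : k < s :=
  lt_of_le_of_ne ((mem_Pset.1 hk).1 ▸ Nat.left_le_or) (mem_Pset.1 hk).2

theorem add_pow_sub_pow_eq_sum_Pset {R : Type*} [CommRing R] [CharP R 2] (x y : R) (j : ℕ) :
    (x + y) ^ j - x ^ j = ∑ k ∈ Pset j, x ^ k * y ^ (j - k) := by
  have hj : j ∈ (range (j + 1)).filter (· ||| j = j) := by simp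
  rw [add_pow_char_two, ← add_sum_erase _ _ hj, Nat.sub_self, pow_zero, mul_one,
    add_sub_cancel_left]
  congr 1
  ext k
  simp only [mem_erase, mem_filter, mem_range, Pset]
  tauto

theorem sum_mul_add_pow_sub_pow_eq {R ι : Type*} [CommRing R] [CharP R 2] (I : Finset ι)
    (e : ι → ℕ) {K : Finset ℕ} (hK : ∀ i ∈ I, Pset (e i) ⊆ K) (A : ι → R) (x β : R) :
    ∑ i ∈ I, A i * ((x + β) ^ e i - x ^ e i) =
      ∑ k ∈ K, (∑ i ∈ I with k ∈ Pset (e i), A i * β ^ (e i - k)) * x ^ k := by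
  simp_rw [add_pow_sub_pow_eq_sum_Pset, mul_sum, sum_mul]
  rw [sum_comm' (t' := K) (s' := fun k => I.filter fun i => k ∈ Pset (e i))]
  · exact sum_congr rfl fun _ _ => sum_congr rfl fun _ _ => by ring
  · intro i k
    simp only [mem_filter]
    exact ⟨fun h => ⟨h, hK i h.1 h.2⟩, fun h => h.1⟩

theorem eq_zero_of_forall_sum_mul_pow_eq_zero {F ι : Type*} [Field F] [Fintype F]
    {I : Finset ι} {e : ι → ℕ} {A : ι → F} (he : Set.InjOn e I)
    (hlt : ∀ i ∈ I, e i < Fintype.card F) (h : ∀ x : F, ∑ i ∈ I, A i * x ^ e i = 0)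
    {i : ι} (hi : i ∈ I) : A i = 0 := by
  open Polynomial in
  set p : F[X] := ∑ i ∈ I, C (A i) * X ^ e i
  have hp : p = 0 := by
    refine eq_zero_of_natDegree_lt_card_of_eval_eq_zero p Function.injective_id
      (fun x => by simpa [p, eval_finsetSum] using h x) ?_
    refine (natDegree_sum_le_of_forall_le _ _ (n := Fintype.card F - 1) fun i hi => ?_).trans_lt
      (Nat.sub_lt Fintype.card_pos one_pos)
    exact (natDegree_C_mul_X_pow_le _ _).trans (Nat.le_sub_one_of_lt (hlt i hi))
  have hcoeff : p.coeff (e i) = A i := by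
    simp only [p, finsetSum_coeff, coeff_C_mul_X_pow]
    rw [sum_eq_single_of_mem i hi fun j hj hji => if_neg fun h => hji (he hj hi h.symm), if_pos rfl]
  rw [← hcoeff, hp, coeff_zero]

theorem eq_zero_of_forall_sum_mul_pow_eq_of_notMem {F : Type*} [Field F] [Fintype F]
    {K S : Finset ℕ} {D A : ℕ → F} (hK : ∀ j ∈ K, j < Fintype.card F)
    (hS : ∀ j ∈ S, j < Fintype.card F)
    (h : ∀ x : F, ∑ j ∈ K, D j * x ^ j = ∑ j ∈ S, A j * x ^ j) {k : ℕ} (hk : k ∈ K)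
    (hkS : k ∉ S) : D k = 0 := by
  have hI : ∀ x : F, ∑ j ∈ K ∪ S,
      ((if j ∈ K then D j else 0) - (if j ∈ S then A j else 0)) * x ^ j = 0 := fun x => by
    simp only [sub_mul, sum_sub_distrib, ite_mul, zero_mul, sum_ite_mem,
      union_inter_cancel_left, union_inter_cancel_right, h x, sub_self]
  have := eq_zero_of_forall_sum_mul_pow_eq_zero (Function.injective_id.injOn)
    (fun j hj => (mem_union.1 hj).elim (hK j) (hS j)) hI (mem_union_left S hk)
  simpa [hk, hkS] using this

theorem trace_sq_eq_self {F : Type*} [Field F] [Fintype F] [CharP F 2] {m : ℕ}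
    (hF : Fintype.card F = 2 ^ m) (z : F) :
    (∑ a ∈ range m, z ^ 2 ^ a) ^ 2 = ∑ a ∈ range m, z ^ 2 ^ a := by
  have hcyc := (sum_range_succ' (fun a => z ^ 2 ^ a) m).symm.trans (sum_range_succ _ m)
  rw [← hF, FiniteField.pow_card, pow_zero, pow_one, add_left_inj] at hcyc
  rw [CharTwo.sum_sq, ← hcyc]
  exact sum_congr rfl fun a _ => by rw [← pow_mul, ← pow_succ]

theorem two_mul_mod_injOn {n : ℕ} (hn : Odd n) : Set.InjOn (fun j => 2 * j % n) (Set.Iio n) :=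
  fun a ha b hb h => by
    have := Nat.ModEq.cancel_left_of_coprime hn.coprime_two_right h
    rwa [Nat.ModEq, Nat.mod_eq_of_lt ha, Nat.mod_eq_of_lt hb] at this

theorem eq_zero_of_two_pow_mul_mod_eq_zero {n : ℕ} (hn : Odd n) {j : ℕ} (hj : j < n) (a : ℕ)
    (h : 2 ^ a * j % n = 0) : j = 0 :=
  Nat.eq_zero_of_dvd_of_lt
    ((hn.coprime_two_right.pow_right a).dvd_of_dvd_mul_left (Nat.dvd_of_mod_eq_zero h)) hj

theorem mem_cycCoset {n m s t : ℕ} : t ∈ cycCoset n m s ↔ ∃ a < m, 2 ^ a * s % n = t := by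
  simp [cycCoset]

theorem IsExpSet.two_pow_mul_mod_mem {n : ℕ} {S : Finset ℕ} (hS : IsExpSet n S) {j : ℕ}
    (hj : j ∈ S) (a : ℕ) : 2 ^ a * j % n ∈ S := by
  induction a with
  | zero => simpa [Nat.mod_eq_of_lt (hS.1 j hj)]
  | succ a ih => simpa only [Nat.mul_mod_mod, ← mul_assoc, ← pow_succ'] using hS.2 _ ih

theorem IsExpSet.ccSet_subset {n m : ℕ} {S P : Finset ℕ} (hS : IsExpSet n S) (hP : P ⊆ S) :
    ccSet n m P ⊆ S := by
  intro k hk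
  obtain ⟨s, hs, hk⟩ := mem_biUnion.1 hk
  obtain ⟨a, -, rfl⟩ := mem_cycCoset.1 hk
  exact hS.two_pow_mul_mod_mem (hP hs) a

theorem IsExpSet.sum_comp_two_mul_mod {M : Type*} [AddCommMonoid M] {n : ℕ} {S : Finset ℕ}
    (hn : Odd n) (hS : IsExpSet n S) (f : ℕ → M) :
    ∑ j ∈ S, f (2 * j % n) = ∑ j ∈ S, f j := by
  have hinj : Set.InjOn (fun j => 2 * j % n) S :=
    (two_mul_mod_injOn hn).mono fun j hj => hS.1 j hj
  exact sum_nbij _ hS.2 hinj (surjOn_of_injOn_of_card_le _ hS.2 hinj le_rfl) fun _ _ => rfl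

section Mersenne

variable {m n : ℕ}

theorem odd_of_eq_two_pow_sub_one (hm : 0 < m) (hn : n = 2 ^ m - 1) : Odd n := by
  have : 2 ^ m = 2 * 2 ^ (m - 1) := by rw [← pow_succ', Nat.sub_add_cancel hm]
  have := Nat.two_pow_pos (m - 1)
  exact Nat.odd_iff.2 (by omega)

theorem two_pow_mul_mod_eq_mod (hn : n = 2 ^ m - 1) (x : ℕ) : 2 ^ m * x % n = x % n := by
  have : 2 ^ m = n + 1 := by have := Nat.one_le_two_pow (n := m); omega
  rw [this, add_mul, one_mul, Nat.mul_add_mod_self_left]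

/-- Modulo `2 ^ m - 1`, doubling rotates the `m`-bit expansion cyclically. -/
theorem testBit_two_mul_mod (hm : 0 < m) (hn : n = 2 ^ m - 1) {x : ℕ} (hx : x < n) :
    (2 * x % n).testBit 0 = x.testBit (m - 1) ∧
      ∀ i, (2 * x % n).testBit (i + 1) = (decide (i < m - 1) && x.testBit i) := by
  have hnP : n = 2 * 2 ^ (m - 1) - 1 := by rw [hn, ← pow_succ', Nat.sub_add_cancel hm]
  have hPpos := Nat.two_pow_pos (m - 1)
  obtain ⟨q, hq⟩ : ∃ q, x / 2 ^ (m - 1) = q := ⟨_, rfl⟩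
  obtain ⟨r, hr⟩ : ∃ r, x % 2 ^ (m - 1) = r := ⟨_, rfl⟩
  have hx' : x = 2 ^ (m - 1) * q + r := hq ▸ hr ▸ (Nat.div_add_mod x _).symm
  have hrlt : r < 2 ^ (m - 1) := hr ▸ Nat.mod_lt x hPpos
  have hqlt : q < 2 := hq ▸ Nat.div_lt_of_lt_mul (by omega)
  have key : 2 * x % n = 2 * r + q := by
    obtain rfl | rfl : q = 0 ∨ q = 1 := by omega
    · rw [Nat.mod_eq_of_lt (by omega)]
      omega
    · rw [show 2 * x = 2 * r + 1 + n by omega, Nat.add_mod_right, Nat.mod_eq_of_lt (by omega)]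
  refine ⟨?_, fun i => ?_⟩
  · rw [key, Nat.testBit_zero, Nat.testBit_eq_decide_div_mod_eq, hq, decide_eq_decide]
    omega
  · rw [key, Nat.testBit_succ, show (2 * r + q) / 2 = r by omega, ← hr, Nat.testBit_mod_two_pow]

theorem or_eq_right_two_mul_mod (hm : 0 < m) (hn : n = 2 ^ m - 1) {k j : ℕ} (hj : j < n)
    (h : k ||| j = j) : 2 * k % n ||| 2 * j % n = 2 * j % n := by
  have hk : k < n := lt_of_le_of_lt (h ▸ Nat.left_le_or) hj
  obtain ⟨hk0, hk⟩ := testBit_two_mul_mod hm hn hk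
  obtain ⟨hj0, hj⟩ := testBit_two_mul_mod hm hn hj
  rw [Nat.or_eq_right_iff_testBit] at h ⊢
  rintro (_ | i) hi
  · rw [hk0] at hi
    rw [hj0]
    exact h _ hi
  · rw [hk, Bool.and_eq_true] at hi
    rw [hj, hi.1, h _ hi.2]
    rfl

theorem or_eq_right_two_pow_mul_mod (hm : 0 < m) (hn : n = 2 ^ m - 1) {k j : ℕ} (hj : j < n)
    (h : k ||| j = j) (a : ℕ) : 2 ^ a * k % n ||| 2 ^ a * j % n = 2 ^ a * j % n := by
  induction a with
  | zero => simpa [Nat.mod_eq_of_lt hj, Nat.mod_eq_of_lt (lt_of_le_of_lt (h ▸ Nat.left_le_or) hj)]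
  | succ a ih =>
    have hn0 : 0 < n := by omega
    simpa only [Nat.mul_mod_mod, ← mul_assoc, ← pow_succ'] using
      or_eq_right_two_mul_mod hm hn (Nat.mod_lt _ hn0) ih

theorem isExpSet_ccSet (hm : 0 < m) (hn : n = 2 ^ m - 1) (P : Finset ℕ) :
    IsExpSet n (ccSet n m P) := by
  have hn0 : 0 < n := (odd_of_eq_two_pow_sub_one hm hn).pos
  refine ⟨fun k hk => ?_, fun k hk => ?_⟩ <;>
    obtain ⟨s, hs, hk⟩ := mem_biUnion.1 hk <;> obtain ⟨a, ha, rfl⟩ := mem_cycCoset.1 hk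
  · exact Nat.mod_lt _ hn0
  refine mem_biUnion.2 ⟨s, hs, mem_cycCoset.2 ?_⟩
  rw [Nat.mul_mod_mod, ← mul_assoc, ← pow_succ']
  obtain ha' | rfl := (Nat.succ_le_of_lt ha).lt_or_eq
  · exact ⟨a + 1, ha', rfl⟩
  · exact ⟨0, hm, by rw [two_pow_mul_mod_eq_mod hn, pow_zero, one_mul]⟩

theorem isExpSet_cycCoset (hm : 0 < m) (hn : n = 2 ^ m - 1) (s : ℕ) :
    IsExpSet n (cycCoset n m s) := by
  simpa [ccSet] using isExpSet_ccSet hm hn {s}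

theorem Pset_subset_ccSet_Pset (hm : 0 < m) (hn : n = 2 ^ m - 1) {s j : ℕ} (hs : s < n)
    (hj : j ∈ cycCoset n m s) : Pset j ⊆ ccSet n m (Pset s) := by
  intro k hk
  obtain ⟨hkj, hne⟩ := mem_Pset.1 hk
  obtain ⟨a, ha, rfl⟩ := mem_cycCoset.1 hj
  have hjn : 2 ^ a * s % n < n := Nat.mod_lt _ (by omega)
  have hkn : k < n := (lt_of_mem_Pset hk).trans hjn
  have hrot := or_eq_right_two_pow_mul_mod hm hn hjn hkj (m - a)
  rw [Nat.mul_mod_mod, ← mul_assoc, ← pow_add, Nat.sub_add_cancel ha.le,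
    two_pow_mul_mod_eq_mod hn, Nat.mod_eq_of_lt hs] at hrot
  have hback : 2 ^ a * (2 ^ (m - a) * k % n) % n = k := by
    rw [Nat.mul_mod_mod, ← mul_assoc, ← pow_add, Nat.add_sub_cancel' ha.le,
      two_pow_mul_mod_eq_mod hn, Nat.mod_eq_of_lt hkn]
  refine mem_biUnion.2 ⟨_, mem_Pset.2 ⟨hrot, fun h => hne ?_⟩, mem_cycCoset.2 ⟨a, ha, hback⟩⟩
  rw [← hback, h]

variable {F : Type*} [Field F] [Fintype F]

theorem pow_two_pow_mul_mod (hm : 0 < m) (hn : n = 2 ^ m - 1) (hF : Fintype.card F = 2 ^ m)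
    {j : ℕ} (hj : j < n) (a : ℕ) (x : F) : x ^ (2 ^ a * j) = x ^ (2 ^ a * j % n) := by
  rcases eq_or_ne x 0 with rfl | hx
  · rcases eq_or_ne j 0 with rfl | hj0
    · simp
    have h := mt (eq_zero_of_two_pow_mul_mod_eq_zero (odd_of_eq_two_pow_sub_one hm hn) hj a) hj0
    rw [zero_pow (by positivity), zero_pow h]
  · exact pow_eq_pow_mod _ (hn ▸ hF ▸ FiniteField.pow_card_sub_one_eq_one x hx)

variable [CharP F 2]

theorem sum_mul_pow_sq (hm : 0 < m) (hn : n = 2 ^ m - 1) (hF : Fintype.card F = 2 ^ m)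
    {S : Finset ℕ} (hS : ∀ j ∈ S, j < n) (A : ℕ → F) (x : F) :
    (∑ j ∈ S, A j * x ^ j) ^ 2 = ∑ j ∈ S, A j ^ 2 * x ^ (2 * j % n) := by
  rw [CharTwo.sum_sq]
  refine sum_congr rfl fun j hj => ?_
  rw [mul_pow, ← pow_mul, mul_comm j, ← pow_one 2, pow_two_pow_mul_mod hm hn hF (hS j hj)]

theorem sq_eq_self_of_mem_extCyclicCode (hm : 0 < m) (hn : n = 2 ^ m - 1)
    (hF : Fintype.card F = 2 ^ m) {S : Finset ℕ} (hS : IsExpSet n S) {c : F → F}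
    (hc : c ∈ extCyclicCode n S) (x : F) : c x ^ 2 = c x := by
  obtain ⟨A, hA, hc⟩ := hc
  rw [hc, sum_mul_pow_sq hm hn hF hS.1,
    ← hS.sum_comp_two_mul_mod (odd_of_eq_two_pow_sub_one hm hn) fun j => A j * x ^ j]
  exact sum_congr rfl fun j hj => by rw [hA j hj]

theorem mem_extCyclicCode_of_sq_eq_self (hm : 0 < m) (hn : n = 2 ^ m - 1)
    (hF : Fintype.card F = 2 ^ m) {S : Finset ℕ} (hS : IsExpSet n S) {c : F → F} {A : ℕ → F}
    (hc : ∀ x, c x = ∑ j ∈ S, A j * x ^ j) (hsq : ∀ x, c x ^ 2 = c x) :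
    c ∈ extCyclicCode n S := by
  have hodd := odd_of_eq_two_pow_sub_one hm hn
  have hvanish : ∀ x : F, ∑ j ∈ S, (A (2 * j % n) - A j ^ 2) * x ^ (2 * j % n) = 0 := by
    intro x
    rw [sum_congr rfl fun j _ => sub_mul _ _ _, sum_sub_distrib,
      hS.sum_comp_two_mul_mod hodd fun j => A j * x ^ j, ← sum_mul_pow_sq hm hn hF hS.1, ← hc,
      hsq, sub_self]
  have hlt : ∀ j ∈ S, 2 * j % n < Fintype.card F := fun j _ =>
    (Nat.mod_lt _ hodd.pos).trans (by rw [hF, hn]; exact Nat.sub_lt (Nat.two_pow_pos m) one_pos)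
  exact ⟨A, fun j hj => sub_eq_zero.1 (eq_zero_of_forall_sum_mul_pow_eq_zero
    ((two_mul_mod_injOn hodd).mono fun j hj => hS.1 j hj) hlt hvanish hj), hc⟩

theorem extCyclicCode_mono (hm : 0 < m) (hn : n = 2 ^ m - 1) (hF : Fintype.card F = 2 ^ m)
    {S T : Finset ℕ} (hT : IsExpSet n T) (hS : IsExpSet n S) (hTS : T ⊆ S) :
    (extCyclicCode n T : Set (F → F)) ⊆ extCyclicCode n S := by
  intro c hc
  obtain ⟨A, -, hA⟩ := id hc
  refine mem_extCyclicCode_of_sq_eq_self hm hn hF hS (A := fun j => if j ∈ T then A j else 0)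
    (fun x => ?_) (sq_eq_self_of_mem_extCyclicCode hm hn hF hT hc)
  simp only [hA, ite_mul, zero_mul, sum_ite_mem, inter_eq_right.2 hTS]

theorem derivSet_subset_extCyclicCode_ccSet_Pset (hm : 0 < m) (hn : n = 2 ^ m - 1)
    (hF : Fintype.card F = 2 ^ m) {s : ℕ} (hs : s < n) (β : F) :
    derivSet β (extCyclicCode n (cycCoset n m s)) ⊆ extCyclicCode n (ccSet n m (Pset s)) := by
  rintro _ ⟨c, hc, rfl⟩
  obtain ⟨A, -, hA⟩ := id hc
  refine mem_extCyclicCode_of_sq_eq_self hm hn hF (isExpSet_ccSet hm hn _)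
    (A := fun k => ∑ j ∈ cycCoset n m s with k ∈ Pset j, A j * β ^ (j - k)) (fun x => ?_)
    (fun x => ?_)
  · rw [hA, hA, ← sum_sub_distrib]
    simp_rw [← mul_sub]
    exact sum_mul_add_pow_sub_pow_eq _ id (fun j hj => Pset_subset_ccSet_Pset hm hn hs hj) A x β
  · have hsq := sq_eq_self_of_mem_extCyclicCode hm hn hF (isExpSet_cycCoset hm hn s) hc
    rw [sub_pow_char, hsq, hsq]

/-- The codeword `x ↦ Tr(γ x ^ s)`, with exponents reduced modulo `n`. -/
theorem trace_mem_extCyclicCode_cycCoset (hm : 0 < m) (hn : n = 2 ^ m - 1)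
    (hF : Fintype.card F = 2 ^ m) {s : ℕ} (hs : s < n) (γ : F) :
    (fun x : F => ∑ a ∈ range m, γ ^ 2 ^ a * x ^ (2 ^ a * s % n)) ∈
      extCyclicCode n (cycCoset n m s) := by
  have htrace : ∀ x : F, ∑ a ∈ range m, γ ^ 2 ^ a * x ^ (2 ^ a * s % n) =
      ∑ a ∈ range m, (γ * x ^ s) ^ 2 ^ a := fun x => sum_congr rfl fun a _ => by
    rw [mul_pow, ← pow_mul, mul_comm s, pow_two_pow_mul_mod hm hn hF hs]
  refine mem_extCyclicCode_of_sq_eq_self hm hn hF (isExpSet_cycCoset hm hn s)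
    (A := fun j => ∑ a ∈ range m with 2 ^ a * s % n = j, γ ^ 2 ^ a) (fun x => ?_) (fun x => ?_)
  · rw [← sum_fiberwise_of_maps_to (g := fun a => 2 ^ a * s % n)
      fun a ha => mem_cycCoset.2 ⟨a, mem_range.1 ha, rfl⟩]
    refine sum_congr rfl fun j _ => ?_
    rw [sum_mul]
    exact sum_congr rfl fun a ha => by rw [(mem_filter.1 ha).2]
  · rw [htrace]
    exact trace_sq_eq_self hF _

theorem mem_of_mem_Pset_of_derivSet_subset (hm : 0 < m) (hn : n = 2 ^ m - 1)
    (hF : Fintype.card F = 2 ^ m) {s : ℕ} (hs : s < n) {β : F} (hβ : β ≠ 0) {S : Finset ℕ}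
    (hS : IsExpSet n S) (hsub : derivSet β (extCyclicCode n (cycCoset n m s)) ⊆ extCyclicCode n S)
    {k : ℕ} (hk : k ∈ Pset s) : k ∈ S := by
  by_contra hkS
  have hcard : n < Fintype.card F := by rw [hF, hn]; exact Nat.sub_lt (Nat.two_pow_pos m) one_pos
  have hn0 : 0 < n := (odd_of_eq_two_pow_sub_one hm hn).pos
  -- the coefficient of `x ^ k` in the derivative of `x ↦ Tr(γ x^s)`, as a polynomial in `γ`
  have hvanish : ∀ γ : F,
      ∑ a ∈ range m with k ∈ Pset (2 ^ a * s % n), β ^ (2 ^ a * s % n - k) * γ ^ 2 ^ a = 0 := by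
    intro γ
    obtain ⟨A, -, hA⟩ := hsub ⟨_, trace_mem_extCyclicCode_cycCoset hm hn hF hs γ, rfl⟩
    have hderiv : ∀ x : F, ∑ j ∈ range n,
        (∑ a ∈ range m with j ∈ Pset (2 ^ a * s % n), γ ^ 2 ^ a * β ^ (2 ^ a * s % n - j)) *
          x ^ j = ∑ j ∈ S, A j * x ^ j := fun x => by
      rw [← hA x]
      dsimp only
      rw [← sum_sub_distrib]
      simp_rw [← mul_sub]
      exact (sum_mul_add_pow_sub_pow_eq _ _
        (fun a _ j hj => mem_range.2 ((lt_of_mem_Pset hj).trans (Nat.mod_lt _ hn0))) _ x β).symm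
    simp_rw [mul_comm (β ^ _)]
    exact eq_zero_of_forall_sum_mul_pow_eq_of_notMem (fun j hj => (mem_range.1 hj).trans hcard)
      (fun j hj => (hS.1 j hj).trans hcard) hderiv
      (mem_range.2 ((lt_of_mem_Pset hk).trans hs)) hkS
  have h0 : (0 : ℕ) ∈ (range m).filter fun a => k ∈ Pset (2 ^ a * s % n) := by
    simpa [Nat.mod_eq_of_lt hs] using ⟨hm, hk⟩
  have := eq_zero_of_forall_sum_mul_pow_eq_zero
    ((Nat.pow_right_injective le_rfl).injOn) (fun a ha => ?_) hvanish h0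
  · simp [Nat.mod_eq_of_lt hs, hβ] at this
  · rw [hF]
    exact Nat.pow_lt_pow_right one_lt_two (mem_range.1 (mem_filter.1 ha).1)

end Mersenne

theorem cyclicDD_of_minimal_cyclic_code_general (m : ℕ)
    (n : ℕ) (hn : n = 2 ^ m - 1)
    {F : Type*} [Field F] [Fintype F] (hF : Fintype.card F = 2 ^ m)
    (s : ℕ) (hs : s < n) (β : F) (hβ : β ≠ 0) :
    derivSet β (extCyclicCode n (cycCoset n m s))
        ⊆ (extCyclicCode n (ccSet n m (Pset s)) : Set (F → F)) ∧
    ∀ S' : Finset ℕ, IsExpSet n S' →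
      derivSet β (extCyclicCode n (cycCoset n m s))
          ⊆ (extCyclicCode n S' : Set (F → F)) →
      (extCyclicCode n (ccSet n m (Pset s)) : Set (F → F)) ⊆ extCyclicCode n S' := by
  have hm : 0 < m := Nat.pos_of_ne_zero fun h => by rw [h, pow_zero] at hn; omega
  have : CharP F 2 := charP_of_card_eq_prime_pow hF
  refine ⟨derivSet_subset_extCyclicCode_ccSet_Pset hm hn hF hs β, fun S' hS' hsub => ?_⟩
  exact extCyclicCode_mono hm hn hF (isExpSet_ccSet hm hn _) hS' <| hS'.ccSet_subset
    fun k hk => mem_of_mem_Pset_of_derivSet_subset hm hn hF hs hβ hS' hsub hk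

/-- Lemma 1: for every `s ∈ {0,…,n-1}` and every `β ∈ F^*`, the cyclic derivative
descendant `D(M_s, β)` of the extended minimal cyclic code `M_s` (the smallest
extended cyclic code containing the derivatives of all codewords of `M_s` in
direction `β`) is the extended cyclic code with exponent set `cc(P(s))`;
in particular it does not depend on `β`. -/
theorem cyclicDD_of_minimal_cyclic_code (m : ℕ) (hm : 0 < m)
    (n : ℕ) (hn : n = 2 ^ m - 1)
    {F : Type*} [Field F] [Fintype F] (hF : Fintype.card F = 2 ^ m)
    (s : ℕ) (hs : s < n) (β : F) (hβ : β ≠ 0) :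
    derivSet β (extCyclicCode n (cycCoset n m s))
        ⊆ (extCyclicCode n (ccSet n m (Pset s)) : Set (F → F)) ∧
    ∀ S' : Finset ℕ, IsExpSet n S' →
      derivSet β (extCyclicCode n (cycCoset n m s))
          ⊆ (extCyclicCode n S' : Set (F → F)) →
      (extCyclicCode n (ccSet n m (Pset s)) : Set (F → F)) ⊆ extCyclicCode n S' :=
  cyclicDD_of_minimal_cyclic_code_general m n hn hF s hs β hβ
end

section
/- Proposition 2: Let C be a nontrivial extended cyclic code with minimum Hamming distance d, and let d_D be the minimum Hamming distance of its cyclic derivative descendant D(C). Then d_D ≤ 2d. -/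
open Finset in
lemma norm_deriv_le {F : Type*} [Field F] [Fintype F] [DecidableEq F] (c : F → F) (β : F) :
    hammingNorm (fun x => c (x + β) - c x) ≤ 2 * hammingNorm c := by
  unfold hammingNorm
  have hsub : ({x | (fun x => c (x + β) - c x) x ≠ 0} : Finset F) ⊆
      ({x | c (x + β) ≠ 0} : Finset F) ∪ ({x | c x ≠ 0} : Finset F) := by
    intro x hx
    simp only [mem_filter, mem_union] at *
    by_contra h
    push_neg at h
    simp [h.1, h.2] at hx
  have hcard : #({x | c (x + β) ≠ 0} : Finset F) = #({x | c x ≠ 0} : Finset F) := by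
    apply Finset.card_bij' (fun x _ => x + β) (fun y _ => y - β) <;>
      intros <;> simp_all
  calc #({x | (fun x => c (x + β) - c x) x ≠ 0} : Finset F)
      ≤ #(({x | c (x + β) ≠ 0} : Finset F) ∪ ({x | c x ≠ 0} : Finset F)) :=
        Finset.card_le_card hsub
    _ ≤ #({x | c (x + β) ≠ 0} : Finset F) + #({x | c x ≠ 0} : Finset F) :=
        Finset.card_union_le _ _
    _ ≤ 2 * #({x | c x ≠ 0} : Finset F) := by omega

lemma exists_nonzero_codeword {F : Type*} [Field F] [Fintype F] [DecidableEq F]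
    (n : ℕ) (S : Finset ℕ) (hlt : ∀ j ∈ S, j < n) (hne : S.Nonempty)
    (hcard : n < Fintype.card F) :
    ∃ c ∈ extCyclicCode n S (F := F), c ≠ (0 : F → F) := by
  classical
  refine ⟨fun x => ∑ j ∈ S, x ^ j, ⟨fun _ => 1, by simp, fun x => by simp⟩, ?_⟩
  set p : Polynomial F := ∑ j ∈ S, Polynomial.X ^ j with hp
  obtain ⟨j₀, hj₀⟩ := hne
  have hpne : p ≠ 0 := by
    intro h
    have : p.coeff j₀ = 1 := by
      rw [hp, Polynomial.finset_sum_coeff]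
      rw [Finset.sum_eq_single j₀]
      · simp
      · intro b hb hbne
        simp only [Polynomial.coeff_X_pow, if_neg (Ne.symm hbne)]
      · simp [hj₀]
    rw [h] at this
    simp at this
  have hdeg : p.natDegree < Fintype.card F := by
    have : p.natDegree ≤ n - 1 := by
      apply Polynomial.natDegree_sum_le_of_forall_le
      intro j hj
      have := hlt j hj
      simp only [Polynomial.natDegree_X_pow]
      omega
    have hn0 : 0 < n := lt_of_le_of_lt (Nat.zero_le _) (hlt j₀ hj₀)
    omega
  obtain ⟨r, hr⟩ := Polynomial.exists_eval_ne_zero_of_natDegree_lt_card p hpne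
    (by rw [Cardinal.mk_fintype]; exact_mod_cast hdeg)
  intro hc
  apply hr
  have := congrFun hc r
  simpa [hp, Polynomial.eval_finset_sum] using this

/-- Proposition 2: let `C` be a nontrivial extended cyclic code with minimum
Hamming distance `d`, and let `d_D` be the minimum Hamming distance of its cyclic
derivative descendant `D(C)` (the smallest extended cyclic code containing the
derivatives of the codewords of `C`, in any nonzero direction).
Then `d_D ≤ 2d`. -/
theorem distance_of_cyclicDD (m : ℕ) (hm : 0 < m)
    (n : ℕ) (hn : n = 2 ^ m - 1)
    {F : Type*} [Field F] [Fintype F] [DecidableEq F] (hF : Fintype.card F = 2 ^ m)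
    (S : Finset ℕ) (hS : IsExpSet n S) (hnt : S ≠ {0})
    (SD : Finset ℕ) (hSD : IsExpSet n SD)
    (hcont : ∀ β : F, β ≠ 0 →
      derivSet β (extCyclicCode n S) ⊆ (extCyclicCode n SD : Set (F → F)))
    (hmin : ∀ β : F, β ≠ 0 → ∀ S' : Finset ℕ, IsExpSet n S' →
      derivSet β (extCyclicCode n S) ⊆ (extCyclicCode n S' : Set (F → F)) →
      (extCyclicCode n SD : Set (F → F)) ⊆ extCyclicCode n S') :
    minDist (extCyclicCode n SD : Set (F → F))
      ≤ 2 * minDist (extCyclicCode n S : Set (F → F)) := by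
  classical
  set C := (extCyclicCode n S : Set (F → F))
  set CD := (extCyclicCode n SD : Set (F → F))
  set W := { w | ∃ c ∈ C, c ≠ (0 : F → F) ∧ hammingNorm c = w }
  set WD := { w | ∃ c ∈ CD, c ≠ (0 : F → F) ∧ hammingNorm c = w }
  have hone : (1 : F) ≠ 0 := one_ne_zero
  have hncard : n < Fintype.card F := by
    rw [hF, hn]
    have : 1 ≤ 2 ^ m := Nat.one_le_two_pow
    omega
  by_cases hSe : S.Nonempty
  · -- S nonempty: there is a nonzero codeword, W is nonempty
    obtain ⟨c₀, hc₀C, hc₀ne⟩ := exists_nonzero_codeword n S hS.1 hSe hncard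
    have hWne : W.Nonempty := ⟨hammingNorm c₀, c₀, hc₀C, hc₀ne, rfl⟩
    obtain ⟨c, hcC, hcne, hcw⟩ : minDist C ∈ W := Nat.sInf_mem hWne
    by_cases hder : ∃ β : F, β ≠ 0 ∧ (fun x => c (x + β) - c x) ≠ (0 : F → F)
    · obtain ⟨β, hβ, hdne⟩ := hder
      have hmem : (fun x => c (x + β) - c x) ∈ CD :=
        hcont β hβ ⟨c, hcC, rfl⟩
      have : minDist CD ≤ hammingNorm (fun x => c (x + β) - c x) :=
        Nat.sInf_le ⟨_, hmem, hdne, rfl⟩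
      calc minDist CD ≤ hammingNorm (fun x => c (x + β) - c x) := this
        _ ≤ 2 * hammingNorm c := norm_deriv_le c β
        _ = 2 * minDist C := by rw [hcw]
    · -- c is constant and nonzero, so its weight is card F
      push_neg at hder
      have hconst : ∀ x : F, c x = c 0 := by
        intro x
        by_cases hx : x = 0
        · rw [hx]
        · have := congrFun (hder x hx) 0
          simp only [Pi.zero_apply, sub_eq_zero] at this
          simpa using this
      have hc0 : c 0 ≠ 0 := by
        intro h
        apply hcne
        funext x
        rw [hconst x, h]; rfl
      have hwt : hammingNorm c = Fintype.card F := by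
        unfold hammingNorm
        rw [Finset.filter_true_of_mem, Finset.card_univ]
        intro x _
        rw [hconst x]; exact hc0
      have hD : minDist CD ≤ Fintype.card F := by
        rcases Set.eq_empty_or_nonempty WD with h | h
        · have h0 : sInf WD = 0 := by rw [h]; exact Nat.sInf_empty
          show sInf WD ≤ Fintype.card F
          omega
        · obtain ⟨w, cw, hcw', hcwne, hww⟩ := h
          have h1 : minDist CD ≤ w := Nat.sInf_le ⟨cw, hcw', hcwne, hww⟩
          have h2 : w ≤ Fintype.card F := by
            rw [← hww]
            unfold hammingNorm
            exact (Finset.card_filter_le _ _)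
          omega
      calc minDist CD ≤ Fintype.card F := hD
        _ ≤ 2 * hammingNorm c := by omega
        _ = 2 * minDist C := by rw [hcw]
  · -- S empty: the code C is {0}, so CD has no nonzero codewords
    rw [Finset.not_nonempty_iff_eq_empty] at hSe
    subst hSe
    have hC0 : C = {(0 : F → F)} := by
      apply Set.eq_singleton_iff_unique_mem.mpr
      constructor
      · exact ⟨fun _ => 0, by simp, by simp⟩
      · rintro c ⟨A, -, hA⟩
        funext x
        simpa using hA x
    have hsub : CD ⊆ {(0 : F → F)} := by
      have hexp : IsExpSet n (∅ : Finset ℕ) := ⟨by simp, by simp⟩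
      have : derivSet (1 : F) C ⊆ (extCyclicCode n (∅ : Finset ℕ) : Set (F → F)) := by
        rintro d ⟨c, hcC, rfl⟩
        rw [hC0] at hcC
        rw [Set.mem_singleton_iff] at hcC
        subst hcC
        exact ⟨fun _ => 0, by simp, by simp⟩
      have h2 := hmin 1 hone ∅ hexp this
      intro c hc
      have := h2 hc
      obtain ⟨A, -, hA⟩ := this
      rw [Set.mem_singleton_iff]
      funext x
      simpa using hA x
    have hWD : WD = ∅ := by
      rw [Set.eq_empty_iff_forall_notMem]
      rintro w ⟨cw, hcw, hcwne, -⟩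
      exact hcwne (hsub hcw)
    have : minDist CD = 0 := by
      show sInf WD = 0
      rw [hWD]
      exact Nat.sInf_empty
    omega
end

section
/- Proposition 3: Let C be an extended cyclic code with exponent set S_C, and let S_A be the exponent set of its cyclic derivative ascendant A(C). Then for every integer s with 0 ≤ s ≤ n−1: s ∈ S_A if and only if cc(P(s)) ⊆ S_C. -/
namespace Prop3Helpers
open Nat


lemma orSub (a b : ℕ) (h : a ||| b = b) : a ≤ b := by
  have h2 : a &&& b = a := by
    apply Nat.eq_of_testBit_eq
    intro i
    have := congrArg (fun x => Nat.testBit x i) h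
    simp only [Nat.testBit_or] at this
    simp only [Nat.testBit_and]
    cases ha : a.testBit i <;> simp_all
  calc a = a &&& b := h2.symm
  _ ≤ b := Nat.and_le_right

lemma or_eq_iff_testBit (a b : ℕ) :
    a ||| b = b ↔ ∀ i, a.testBit i = true → b.testBit i = true := by
  constructor
  · intro h i hi
    have := congrArg (fun x => Nat.testBit x i) h
    simp only [Nat.testBit_or, hi, Bool.true_or] at this
    exact this.symm
  · intro h
    apply Nat.eq_of_testBit_eq
    intro i
    simp only [Nat.testBit_or]
    cases ha : a.testBit i
    · simp
    · simp [h i ha]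

lemma testBit_two_mul_mod (m : ℕ) (hm : 0 < m) (x : ℕ) (hx : x < 2^m - 1) (i : ℕ) :
    Nat.testBit (2*x % (2^m-1)) i =
      if i = 0 then x.testBit (m-1) else if i < m then x.testBit (i-1) else false := by
  have h2m : (1:ℕ) ≤ 2^m := Nat.one_le_two_pow
  have hmm : 2^(m-1) * 2 = 2^m := by
    rw [← pow_succ]; congr 1; omega
  by_cases hc : x < 2^(m-1)
  · have hy : 2*x % (2^m-1) = 2*x := Nat.mod_eq_of_lt (by omega)
    rw [hy]
    have hbm : x.testBit (m-1) = false := Nat.testBit_lt_two_pow hc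
    rcases i with _ | j
    · simp [Nat.testBit_zero, hbm, Nat.mul_mod_right]
    · rw [Nat.testBit_add_one]
      have : 2 * x / 2 = x := by omega
      rw [this]
      by_cases hj : j + 1 < m
      · simp [hj, Nat.add_sub_cancel]
      · have h0 : j + 1 ≠ 0 := by omega
        rw [if_neg h0, if_neg hj]
        exact Nat.testBit_lt_two_pow (lt_of_lt_of_le hc (Nat.pow_le_pow_right (by norm_num) (by omega)))
  · -- wrap-around case
    have hx2 : 2^(m-1) ≤ x := le_of_not_gt hc
    have hy : 2*x % (2^m-1) = 2*(x - 2^(m-1)) + 1 := by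
      have h1 : 2*x - (2^m-1) = 2*(x - 2^(m-1)) + 1 := by omega
      rw [← h1]
      rw [Nat.mod_eq_sub_mod (by omega)]
      exact Nat.mod_eq_of_lt (by omega)
    rw [hy]
    have hbm : x.testBit (m-1) = true := by
      rw [Nat.testBit_eq_decide_div_mod_eq]
      have : x / 2^(m-1) = 1 := by
        exact Nat.div_eq_of_lt_le (by omega) (by omega)
      simp [this]
    rcases i with _ | j
    · simp [Nat.testBit_zero, hbm, Nat.mul_add_mod]
    · rw [Nat.testBit_add_one]
      have : (2 * (x - 2^(m-1)) + 1) / 2 = x - 2^(m-1) := by omega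
      rw [this]
      by_cases hj : j + 1 < m
      · have h0 : j + 1 ≠ 0 := by omega
        rw [if_neg h0, if_pos hj, Nat.add_sub_cancel]
        have hxsplit : x = 2^(m-1) + (x - 2^(m-1)) := by omega
        conv_rhs => rw [hxsplit]
        rw [Nat.testBit_two_pow_add_gt (by omega)]
      · have h0 : j + 1 ≠ 0 := by omega
        rw [if_neg h0, if_neg hj]
        apply Nat.testBit_lt_two_pow
        calc x - 2^(m-1) < 2^(m-1) := by omega
        _ ≤ 2^j := Nat.pow_le_pow_right (by norm_num) (by omega)

lemma key_or (m : ℕ) (hm : 0 < m) (a b : ℕ) (hb : b < 2^m - 1) (h : a ||| b = b) :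
    (2*a % (2^m-1)) ||| (2*b % (2^m-1)) = 2*b % (2^m-1) := by
  have ha : a ≤ b := orSub a b h
  rw [or_eq_iff_testBit] at h ⊢
  intro i hi
  rw [testBit_two_mul_mod m hm a (by omega)] at hi
  rw [testBit_two_mul_mod m hm b hb]
  by_cases h0 : i = 0
  · rw [if_pos h0] at hi ⊢; exact h _ hi
  · rw [if_neg h0] at hi ⊢
    by_cases h1 : i < m
    · rw [if_pos h1] at hi ⊢; exact h _ hi
    · rw [if_neg h1] at hi; exact absurd hi (by simp)

-- modular arithmetic for n = 2^m - 1
section ModArith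

variable {m n : ℕ} (hm : 0 < m) (hn : n = 2^m - 1)
include hm hn

lemma n_pos : 0 < n := by
  have : 2 ≤ 2^m := by
    calc 2 = 2^1 := (pow_one 2).symm
    _ ≤ 2^m := Nat.pow_le_pow_right (by norm_num) hm
  omega

lemma two_pow_mod_n : 2^m % n = 1 % n := by
  have h : 2^m = n + 1 := by
    have : 1 ≤ 2^m := Nat.one_le_two_pow
    omega
  rw [h, Nat.add_mod_left]

/-- 2^i mod n is periodic with period m -/
lemma pow_mod_n (i : ℕ) : 2^i % n = 2^(i % m) % n := by
  conv_lhs => rw [← Nat.div_add_mod i m]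
  rw [pow_add, pow_mul, Nat.mul_mod, Nat.pow_mod, two_pow_mod_n hm hn,
    ← Nat.pow_mod, one_pow, ← Nat.mul_mod, one_mul]

lemma pow_mul_mod_mem (s : ℕ) (hs : s < n) (i : ℕ) : 2^i * s % n ∈ cycCoset n m s := by
  have h1 : 2^i * s % n = 2^(i % m) * s % n := by
    rw [Nat.mul_mod, pow_mod_n hm hn, ← Nat.mul_mod]
  rw [h1]
  exact Finset.mem_image.mpr ⟨i % m, Finset.mem_range.mpr (Nat.mod_lt _ hm), rfl⟩

lemma mem_cycCoset_self (s : ℕ) (hs : s < n) : s ∈ cycCoset n m s := by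
  have := pow_mul_mod_mem hm hn s hs 0
  simpa [Nat.mod_eq_of_lt hs] using this

lemma sigma_rho (k : ℕ) (hk : k < n) : 2^(m-1) * (2*k % n) % n = k := by
  rw [Nat.mul_mod, Nat.mod_mod_of_dvd, ← Nat.mul_mod]
  · rw [← mul_assoc]
    have : 2^(m-1) * 2 = 2^m := by rw [← pow_succ]; congr 1; omega
    rw [this, Nat.mul_mod, pow_mod_n hm hn, Nat.mod_self, pow_zero, ← Nat.mul_mod, one_mul,
      Nat.mod_eq_of_lt hk]
  · exact dvd_refl n

omit hm hn in
lemma rho_pow' (N a i : ℕ) : 2 * (2^i * a % N) % N = 2^(i+1) * a % N := by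
  have h : (2 * (2^i * a % N)) ≡ 2 * (2^i * a) [MOD N] := (Nat.mod_modEq _ N).mul_left 2
  calc 2 * (2^i * a % N) % N = 2 * (2^i * a) % N := h
  _ = 2^(i+1) * a % N := by rw [← mul_assoc, ← pow_succ']

lemma rho_sigma (k : ℕ) (hk : k < n) : 2 * (2^(m-1) * k % n) % n = k := by
  rw [Nat.mul_mod, Nat.mod_mod_of_dvd _ (dvd_refl n), ← Nat.mul_mod, ← mul_assoc]
  have : 2 * 2^(m-1) = 2^m := by rw [← pow_succ']; congr 1; omega
  rw [this, Nat.mul_mod, pow_mod_n hm hn, Nat.mod_self, pow_zero, ← Nat.mul_mod, one_mul,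
    Nat.mod_eq_of_lt hk]

lemma rho_inj (a b : ℕ) (ha : a < n) (hb : b < n) (h : 2*a % n = 2*b % n) : a = b := by
  have := sigma_rho hm hn a ha
  rw [h, sigma_rho hm hn b hb] at this
  exact this.symm

/-- cycCoset is closed under multiplication by powers of two -/
lemma cycCoset_closed (s t : ℕ) (hs : s < n) (ht : t ∈ cycCoset n m s) (i : ℕ) :
    2^i * t % n ∈ cycCoset n m s := by
  obtain ⟨j, hj, rfl⟩ := Finset.mem_image.mp ht
  rw [Nat.mul_mod, Nat.mod_mod_of_dvd _ (dvd_refl n), ← Nat.mul_mod, ← mul_assoc, ← pow_add]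
  exact pow_mul_mod_mem hm hn s hs _

lemma mem_cycCoset_lt (s t : ℕ) (ht : t ∈ cycCoset n m s) : t < n := by
  obtain ⟨j, hj, rfl⟩ := Finset.mem_image.mp ht
  exact Nat.mod_lt _ (n_pos hm hn)

lemma cycCoset_rho_iff (s j : ℕ) (hs : s < n) (hj : j < n) :
    j ∈ cycCoset n m s ↔ 2*j % n ∈ cycCoset n m s := by
  constructor
  · intro h
    have := cycCoset_closed hm hn s j hs h 1
    simpa using this
  · intro h
    have := cycCoset_closed hm hn s _ hs h (m-1)
    rwa [sigma_rho hm hn j hj] at this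

/-- exponent sets are closed under multiplication by powers of two -/
lemma expSet_closed {S : Finset ℕ} (hS : IsExpSet n S) (k : ℕ) (hk : k ∈ S) (i : ℕ) :
    2^i * k % n ∈ S := by
  induction i with
  | zero => simpa [Nat.mod_eq_of_lt (hS.1 k hk)] using hk
  | succ i ih =>
      rw [← rho_pow']
      exact hS.2 _ ih

lemma cycCoset_subset {S : Finset ℕ} (hS : IsExpSet n S) (k : ℕ) (hk : k ∈ S) :
    cycCoset n m k ⊆ S := by
  intro t ht
  obtain ⟨j, hj, rfl⟩ := Finset.mem_image.mp ht
  exact expSet_closed hm hn hS k hk j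

-- Pset lemmas
omit hm hn in
lemma mem_Pset_iff (k s : ℕ) : k ∈ Pset s ↔ k ||| s = s ∧ k ≠ s := by
  unfold Pset
  rw [Finset.mem_filter, Finset.mem_range]
  constructor
  · tauto
  · intro h
    exact ⟨by have := orSub k s h.1; omega, h⟩

omit hm hn in
lemma Pset_lt (k s : ℕ) (hk : k ∈ Pset s) : k < s := by
  rw [mem_Pset_iff] at hk
  have := orSub k s hk.1
  omega

lemma Pset_rho (s k : ℕ) (hs : s < n) (hk : k ∈ Pset s) : 2*k % n ∈ Pset (2*s % n) := by
  rw [mem_Pset_iff] at hk ⊢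
  have hkn : k < n := lt_trans (by have := orSub k s hk.1; omega) hs
  constructor
  · have := key_or m hm k s (by omega) hk.1
    rw [← hn] at this
    exact this
  · intro h
    exact hk.2 (rho_inj hm hn k s hkn hs h)

lemma Pset_rho_surj (s k' : ℕ) (hs : s < n) (hk' : k' ∈ Pset (2*s % n)) :
    ∃ k ∈ Pset s, k' = 2*k % n := by
  rw [mem_Pset_iff] at hk'
  have hsn' : 2*s % n < n := Nat.mod_lt _ (n_pos hm hn)
  have hk'n : k' < n := lt_trans (by have := orSub _ _ hk'.1; omega) hsn'
  refine ⟨2^(m-1) * k' % n, ?_, (rho_sigma hm hn k' hk'n).symm⟩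
  rw [mem_Pset_iff]
  constructor
  · -- apply sigma to k' ||| (2s%n) = 2s%n
    have step : ∀ i : ℕ, (2^i * k' % n) ||| (2^i * (2*s % n) % n) = 2^i * (2*s % n) % n := by
      intro i
      induction i with
      | zero => simpa [Nat.mod_eq_of_lt hk'n, Nat.mod_eq_of_lt hsn'] using hk'.1
      | succ i ih =>
          rw [← rho_pow', ← rho_pow']
          have := key_or m hm (2^i * k' % n) (2^i * (2*s % n) % n)
            (by rw [← hn]; exact Nat.mod_lt _ (n_pos hm hn)) ih
          rwa [← hn] at this
    have := step (m-1)
    have hss : 2^(m-1) * (2*s % n) % n = s := sigma_rho hm hn s hs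
    rwa [hss] at this
  · intro h
    apply hk'.2
    rw [← h] at *
    exact (rho_sigma hm hn k' hk'n).symm ▸ rfl

end ModArith

-- Lucas, binary version
lemma choose_two_mod (j k : ℕ) : Nat.choose j k % 2 = (if k ||| j = j then 1 else 0) := by
  induction j using Nat.strong_induction_on generalizing k with
  | _ j ih =>
    rcases Nat.eq_zero_or_pos j with hj | hj
    · subst hj
      rcases Nat.eq_zero_or_pos k with hk | hk
      · simp [hk]
      · rw [Nat.choose_eq_zero_of_lt hk, if_neg]
        intro h
        have := orSub k 0 h
        omega
    · have : Fact (Nat.Prime 2) := ⟨Nat.prime_two⟩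
      have hrec := @Choose.choose_modEq_choose_mod_mul_choose_div_nat j k 2 this
      unfold Nat.ModEq at hrec
      rw [hrec, Nat.mul_mod, ih (j / 2) (by omega) (k / 2)]
      have hmod : Nat.choose (j % 2) (k % 2) % 2 = if (k % 2) ||| (j % 2) = j % 2 then 1 else 0 := by
        have hj2 : j % 2 = 0 ∨ j % 2 = 1 := by omega
        have hk2 : k % 2 = 0 ∨ k % 2 = 1 := by omega
        rcases hj2 with h1 | h1 <;> rcases hk2 with h2 | h2 <;> simp [h1, h2]
      rw [hmod]
      have horiff : (k ||| j = j) ↔ ((k/2) ||| (j/2) = j/2 ∧ (k % 2) ||| (j % 2) = j % 2) := by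
        constructor
        · intro h
          rw [or_eq_iff_testBit] at h
          constructor
          · rw [or_eq_iff_testBit]
            intro i hi
            rw [Nat.testBit_div_two] at hi ⊢
            exact h _ hi
          · have h0 := h 0
            simp only [Nat.testBit_zero, decide_eq_true_eq] at h0
            rcases Nat.eq_zero_or_pos (k % 2) with e | e
            · simp [e]
            · have : k % 2 = 1 := by omega
              have := h0 (by simp [this])
              have : j % 2 = 1 := by omega
              simp_all
        · rintro ⟨h1, h2⟩
          rw [or_eq_iff_testBit] at h1 ⊢
          intro i hi
          rcases i with _ | i
          · simp only [Nat.testBit_zero, decide_eq_true_eq] at hi ⊢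
            have : k % 2 = 1 := by omega
            rw [this] at h2
            rcases Nat.eq_zero_or_pos (j % 2) with e | e
            · rw [e] at h2; simp [Nat.or_zero] at h2
            · omega
          · rw [Nat.testBit_add_one] at hi ⊢
            exact h1 _ hi
      by_cases hc : k ||| j = j
      · rw [if_pos hc]
        obtain ⟨h1, h2⟩ := horiff.mp hc
        rw [if_pos h1, if_pos h2]
      · rw [if_neg hc]
        rw [horiff] at hc
        rcases Decidable.not_and_iff_or_not.mp hc with h | h
        · rw [if_neg h]; simp
        · rw [if_neg h]; simp

section FieldLemmas

variable {F : Type*} [Field F] [Fintype F] {m n : ℕ} (hm : 0 < m) (hn : n = 2^m - 1)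
  (hF : Fintype.card F = 2 ^ m)
include hm hn hF

omit hn in
lemma charF : CharP F 2 := by
  obtain ⟨p, hpF⟩ := CharP.exists F
  have hp : p.Prime := by
    haveI := hpF
    exact CharP.char_is_prime F p
  have hdvd : p ∣ 2^m := by
    rw [← hF]
    rw [← CharP.cast_eq_zero_iff F p (Fintype.card F)]
    exact FiniteField.cast_card_eq_zero F
  have : p = 2 := by
    have := (Nat.prime_dvd_prime_iff_eq hp Nat.prime_two).mp (hp.dvd_of_dvd_pow hdvd)
    exact this
  subst this
  exact hpF

lemma pow_n_eq_one (β : F) (hβ : β ≠ 0) : β ^ n = 1 := by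
  have := FiniteField.pow_card_sub_one_eq_one β hβ
  rwa [hF, ← hn] at this

lemma pow_mod_exp (β : F) (hβ : β ≠ 0) (a : ℕ) : β ^ a = β ^ (a % n) := by
  conv_lhs => rw [← Nat.div_add_mod a n]
  rw [pow_add, pow_mul, pow_n_eq_one hm hn hF β hβ, one_pow, one_mul]

lemma pow_modeq (β : F) (hβ : β ≠ 0) (a b : ℕ) (h : a ≡ b [MOD n]) : β ^ a = β ^ b := by
  rw [pow_mod_exp hm hn hF β hβ a, pow_mod_exp hm hn hF β hβ b, h]

omit hn in
lemma cast_choose (j k : ℕ) : ((Nat.choose j k : ℕ) : F) = if k ||| j = j then 1 else 0 := by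
  haveI := charF hm hF
  have h2 : (2 : F) = 0 := by exact_mod_cast CharP.cast_eq_zero F 2
  conv_lhs => rw [← Nat.div_add_mod (Nat.choose j k) 2]
  push_cast
  rw [h2, zero_mul, zero_add, choose_two_mod]
  split <;> simp

-- key expansion: `(x+β)^j - x^j = ∑_{k ∈ Pset j} x^k β^(j-k)` in char 2.
omit hn in
lemma expansion (x β : F) (j : ℕ) :
    (x + β) ^ j - x ^ j = ∑ k ∈ Pset j, x ^ k * β ^ (j - k) := by
  have h1 : (x + β) ^ j = ∑ k ∈ Finset.range (j+1),
      (if k ||| j = j then x ^ k * β ^ (j - k) else 0) := by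
    rw [add_pow]
    apply Finset.sum_congr rfl
    intro k hk
    by_cases hc : k ||| j = j
    · rw [if_pos hc, cast_choose hm hF j k, if_pos hc]; ring
    · rw [if_neg hc, cast_choose hm hF j k, if_neg hc]; ring
  rw [h1]
  rw [← Finset.sum_filter]
  have hsplit : (Finset.range (j+1)).filter (fun k => k ||| j = j)
      = insert j (Pset j) := by
    ext k
    simp only [Finset.mem_filter, Finset.mem_range, Finset.mem_insert, mem_Pset_iff]
    constructor
    · rintro ⟨h1, h2⟩
      by_cases hkj : k = j
      · exact Or.inl hkj
      · exact Or.inr ⟨h2, hkj⟩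
    · rintro (rfl | ⟨h1, h2⟩)
      · exact ⟨by omega, Nat.or_self _⟩
      · exact ⟨by have := orSub k j h1; omega, h1⟩
  rw [hsplit, Finset.sum_insert (by
    rw [mem_Pset_iff]
    simp)]
  rw [Nat.sub_self, pow_zero, mul_one]
  abel

end FieldLemmas

section Codes

variable {F : Type*} [Field F] [Fintype F] {m n : ℕ} (hm : 0 < m) (hn : n = 2^m - 1)
  (hF : Fintype.card F = 2 ^ m)
include hm hn hF

omit hm hn in
lemma coeff_extract (hn' : n < Fintype.card F) (T1 T2 : Finset ℕ)
    (h1 : ∀ j ∈ T1, j < n) (h2 : ∀ j ∈ T2, j < n) (c1 c2 : ℕ → F)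
    (heq : ∀ x : F, ∑ j ∈ T1, c1 j * x ^ j = ∑ j ∈ T2, c2 j * x ^ j) (k : ℕ) :
    (if k ∈ T1 then c1 k else 0) = (if k ∈ T2 then c2 k else 0) := by
  classical
  set p : Polynomial F :=
    (∑ j ∈ T1, Polynomial.C (c1 j) * Polynomial.X ^ j)
      - (∑ j ∈ T2, Polynomial.C (c2 j) * Polynomial.X ^ j) with hp
  have hdeg : p.natDegree < Fintype.card F := by
    apply lt_of_le_of_lt (Polynomial.natDegree_sub_le _ _)
    apply max_lt <;>
    · apply lt_of_le_of_lt (Polynomial.natDegree_sum_le_of_forall_le _ _ (fun j hj =>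
        (Polynomial.natDegree_C_mul_X_pow_le _ _).trans (by
          first
            | exact Nat.le_of_lt_succ (Nat.lt_succ_of_lt (h1 j hj))
            | exact Nat.le_of_lt_succ (Nat.lt_succ_of_lt (h2 j hj)))))
      omega
  have heval : ∀ x : F, p.eval x = 0 := by
    intro x
    rw [hp]
    simp only [Polynomial.eval_sub, Polynomial.eval_finset_sum, Polynomial.eval_mul,
      Polynomial.eval_C, Polynomial.eval_pow, Polynomial.eval_X]
    rw [heq x]
    ring
  have hp0 : p = 0 :=
    Polynomial.eq_zero_of_natDegree_lt_card_of_eval_eq_zero p Function.injective_id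
      (fun x => heval x) hdeg
  have := congrArg (fun q => Polynomial.coeff q k) hp0
  simp only [hp, Polynomial.coeff_sub, Polynomial.coeff_zero, Polynomial.finset_sum_coeff,
    Polynomial.coeff_C_mul, Polynomial.coeff_X_pow] at this
  have e1 : ∀ (T : Finset ℕ) (c : ℕ → F),
      (∑ j ∈ T, c j * (if k = j then (1:F) else 0)) = (if k ∈ T then c k else 0) := by
    intro T c
    rw [Finset.sum_congr rfl (fun j hj => by
      rw [show (c j * if k = j then (1:F) else 0) = (if j = k then c j else 0) by
        by_cases h : j = k
        · simp [h]
        · simp [h, Ne.symm h]])]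
    exact Finset.sum_ite_eq' T k c
  rw [e1, e1] at this
  exact sub_eq_zero.mp this

lemma fwd {S S' : Finset ℕ} (hS : IsExpSet n S) (hS' : IsExpSet n S')
    (hd : ∀ β : F, β ≠ 0 → derivSet β (extCyclicCode n S') ⊆ (extCyclicCode n S : Set (F → F)))
    (s : ℕ) (hs : s ∈ S') (k0 : ℕ) (hk0 : k0 ∈ Pset s) : k0 ∈ S := by
  classical
  by_contra hk0S
  have hsn : s < n := hS'.1 s hs
  have hk0lt : k0 < s := Pset_lt k0 s hk0
  have hncard : n < Fintype.card F := by
    rw [hF, hn]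
    have : 1 ≤ 2^m := Nat.one_le_two_pow
    omega
  set Cs := cycCoset n m s with hCs
  have hCsub : Cs ⊆ S' := cycCoset_subset hm hn hS' s hs
  set A : ℕ → F := fun j => if j ∈ Cs then 1 else 0 with hA
  set c : F → F := fun x => ∑ j ∈ S', A j * x ^ j with hc
  have hcmem : c ∈ (extCyclicCode n S' : Set (F → F)) := by
    refine ⟨A, ?_, fun x => rfl⟩
    intro j hj
    by_cases hjc : j ∈ Cs
    · have : 2 * j % n ∈ Cs := (cycCoset_rho_iff hm hn s j hsn (hS'.1 j hj)).mp hjc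
      simp [hA, hjc, this]
    · have : 2 * j % n ∉ Cs := fun hcon =>
        hjc ((cycCoset_rho_iff hm hn s j hsn (hS'.1 j hj)).mpr hcon)
      simp [hA, hjc, this]
  -- the inner coefficient sum vanishes for every β
  have hkey : ∀ β : F, (∑ j ∈ Cs, if k0 ∈ Pset j then β ^ (j - k0) else 0) = 0 := by
    intro β
    by_cases hβ : β = 0
    · subst hβ
      apply Finset.sum_eq_zero
      intro j hj
      by_cases h : k0 ∈ Pset j
      · rw [if_pos h, zero_pow (by have := Pset_lt k0 j h; omega)]
      · rw [if_neg h]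
    · obtain ⟨B, hBconj, hBeq⟩ := hd β hβ ⟨c, hcmem, rfl⟩
      -- compute the derivative as a coefficient sum over range n
      have hder : ∀ x : F, c (x + β) - c x
          = ∑ k ∈ Finset.range n, (∑ j ∈ Cs, if k ∈ Pset j then β ^ (j - k) else 0) * x ^ k := by
        intro x
        rw [hc]
        simp only
        rw [← Finset.sum_sub_distrib]
        have e1 : ∀ j ∈ S', A j * (x + β) ^ j - A j * x ^ j
            = if j ∈ Cs then ((x + β) ^ j - x ^ j) else 0 := by
          intro j hj
          by_cases h : j ∈ Cs <;> simp [hA, h]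
        rw [Finset.sum_congr rfl e1, Finset.sum_ite_mem, Finset.inter_eq_right.mpr hCsub]
        have e2 : ∀ j ∈ Cs, (x + β) ^ j - x ^ j
            = ∑ k ∈ Finset.range n, (if k ∈ Pset j then x ^ k * β ^ (j - k) else 0) := by
          intro j hj
          rw [expansion hm hF x β j]
          rw [Finset.sum_ite_mem, Finset.inter_eq_right.mpr]
          intro k hk
          have hkj := Pset_lt k j hk
          have hjn := mem_cycCoset_lt hm hn s j hj
          exact Finset.mem_range.mpr (by omega)
        rw [Finset.sum_congr rfl e2, Finset.sum_comm]
        apply Finset.sum_congr rfl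
        intro k _
        rw [Finset.sum_mul]
        apply Finset.sum_congr rfl
        intro j _
        by_cases h : k ∈ Pset j <;> simp [h] <;> ring
      have heq : ∀ x : F, ∑ j ∈ S, B j * x ^ j
          = ∑ k ∈ Finset.range n, (∑ j ∈ Cs, if k ∈ Pset j then β ^ (j - k) else 0) * x ^ k := by
        intro x
        rw [← hder x, ← hBeq x]
      have := coeff_extract hF hncard S (Finset.range n) hS.1
        (fun j hj => Finset.mem_range.mp hj) B _ heq k0
      rw [if_neg hk0S, if_pos (Finset.mem_range.mpr (by omega))] at this
      exact this.symm
  -- now turn hkey into a monomial identity and derive a contradiction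
  set T := (Cs.filter (fun j => k0 ∈ Pset j)).image (fun j => j - k0) with hT
  have hinj : ∀ a ∈ Cs.filter (fun j => k0 ∈ Pset j), ∀ b ∈ Cs.filter (fun j => k0 ∈ Pset j),
      a - k0 = b - k0 → a = b := by
    intro a ha b hb hab
    have h1 := Pset_lt k0 a (Finset.mem_filter.mp ha).2
    have h2 := Pset_lt k0 b (Finset.mem_filter.mp hb).2
    omega
  have hTzero : ∀ x : F, ∑ t ∈ T, (1:F) * x ^ t = ∑ t ∈ (∅ : Finset ℕ), (1:F) * x ^ t := by
    intro x
    rw [Finset.sum_empty, hT, Finset.sum_image hinj]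
    rw [← hkey x]
    rw [Finset.sum_filter]
    apply Finset.sum_congr rfl
    intro j _
    by_cases h : k0 ∈ Pset j <;> simp [h]
  have hTbound : ∀ t ∈ T, t < n := by
    intro t ht
    obtain ⟨j, hj, rfl⟩ := Finset.mem_image.mp ht
    have := mem_cycCoset_lt hm hn s j (Finset.mem_filter.mp hj).1
    omega
  have := coeff_extract hF hncard T ∅ hTbound (by simp) (fun _ => 1) (fun _ => 1) hTzero (s - k0)
  have hsT : s - k0 ∈ T := by
    apply Finset.mem_image.mpr
    exact ⟨s, Finset.mem_filter.mpr ⟨mem_cycCoset_self hm hn s hsn, hk0⟩, rfl⟩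
  rw [if_pos hsT, if_neg (Finset.notMem_empty _)] at this
  exact one_ne_zero this

omit hm hn hF in
lemma aux_pow_mod (i k : ℕ) : 2^i * (2*k % n) % n = 2^(i+1) * k % n := by
  have h : 2^i * (2*k % n) ≡ 2^i * (2*k) [MOD n] := (Nat.mod_modEq _ n).mul_left _
  calc 2^i * (2*k % n) % n = 2^i * (2*k) % n := h
  _ = 2^(i+1) * k % n := by ring_nf

omit hF in
lemma Sstar_expSet {S : Finset ℕ} (hS : IsExpSet n S) :
    IsExpSet n ((Finset.range n).filter (fun s => ccSet n m (Pset s) ⊆ S)) := by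
  classical
  constructor
  · intro j hj
    exact Finset.mem_range.mp (Finset.mem_filter.mp hj).1
  · intro s hs
    obtain ⟨hsr, hsub⟩ := Finset.mem_filter.mp hs
    have hsn : s < n := Finset.mem_range.mp hsr
    have hnpos : 0 < n := n_pos hm hn
    refine Finset.mem_filter.mpr ⟨Finset.mem_range.mpr (Nat.mod_lt _ hnpos), ?_⟩
    intro t ht
    obtain ⟨k', hk', htk⟩ := Finset.mem_biUnion.mp ht
    obtain ⟨k, hk, rfl⟩ := Pset_rho_surj hm hn s k' hsn hk'
    obtain ⟨i, hi, rfl⟩ := Finset.mem_image.mp htk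
    rw [aux_pow_mod]
    apply hsub
    apply Finset.mem_biUnion.mpr
    refine ⟨k, hk, ?_⟩
    exact pow_mul_mod_mem hm hn k (by have := Pset_lt k s hk; omega) (i+1)

omit hm hn hF in
lemma Pset_subset_S {S : Finset ℕ} (s : ℕ) (hsn : s < n)
    (hsub : ccSet n m (Pset s) ⊆ S) (hm : 0 < m) (hn : n = 2^m - 1) : Pset s ⊆ S := by
  intro k hk
  apply hsub
  apply Finset.mem_biUnion.mpr
  refine ⟨k, hk, mem_cycCoset_self hm hn k (by have := Pset_lt k s hk; omega)⟩

lemma bwd {S : Finset ℕ} (hS : IsExpSet n S) :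
    ∀ β : F, β ≠ 0 →
      derivSet β (extCyclicCode n ((Finset.range n).filter (fun s => ccSet n m (Pset s) ⊆ S)))
        ⊆ (extCyclicCode n S : Set (F → F)) := by
  classical
  haveI hchar : CharP F 2 := charF hm hF
  set Sstar := (Finset.range n).filter (fun s => ccSet n m (Pset s) ⊆ S) with hSstar
  intro β hβ d hd
  obtain ⟨c, ⟨A, hAconj, hAeq⟩, rfl⟩ := hd
  have hPsub : ∀ j ∈ Sstar, Pset j ⊆ S := by
    intro j hj
    obtain ⟨hjr, hjsub⟩ := Finset.mem_filter.mp hj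
    exact Pset_subset_S j (Finset.mem_range.mp hjr) hjsub hm hn
  have hjn : ∀ j ∈ Sstar, j < n := fun j hj => Finset.mem_range.mp (Finset.mem_filter.mp hj).1
  set B : ℕ → F := fun k => ∑ j ∈ Sstar, if k ∈ Pset j then A j * β ^ (j - k) else 0 with hB
  refine ⟨B, ?_, ?_⟩
  · -- conjugacy
    intro k hk
    have hkn : k < n := hS.1 k hk
    have hSclosed : IsExpSet n Sstar := Sstar_expSet hm hn hS
    rw [hB]
    simp only
    rw [CharTwo.sum_sq]
    refine (Finset.sum_nbij' (fun j => 2 * j % n) (fun j => 2^(m-1) * j % n)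
      ?_ ?_ ?_ ?_ ?_).symm
    · intro j hj
      exact hSclosed.2 j hj
    · intro j hj
      have : 2^(m-1) * j % n ∈ Sstar := by
        have h2 := expSet_closed hm hn hSclosed j hj (m-1)
        exact h2
      exact this
    · intro j hj
      exact sigma_rho hm hn j (hjn j hj)
    · intro j hj
      exact rho_sigma hm hn j (hjn j hj)
    · intro j hj
      -- termwise equality
      by_cases hc : k ∈ Pset j
      · have hc' : 2*k % n ∈ Pset (2*j % n) := Pset_rho hm hn j k (hjn j hj) hc
        rw [if_pos hc, if_pos hc']
        have hA2 : A (2*j % n) = A j ^ 2 := hAconj j hj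
        rw [hA2]
        have hklej : k < j := Pset_lt k j hc
        have hle : 2*k % n < 2*j % n := Pset_lt _ _ hc'
        have hmodeq : (2*j % n) - (2*k % n) ≡ (j - k) * 2 [MOD n] := by
          apply Nat.ModEq.add_right_cancel' (2*k)
          have h1 : ((2*j % n) - (2*k % n)) + 2*k ≡ ((2*j % n) - (2*k % n)) + (2*k % n) [MOD n] :=
            ((Nat.mod_modEq (2*k) n).add_left _).symm
          have h2 : ((2*j % n) - (2*k % n)) + (2*k % n) = 2*j % n := by omega
          have h3 : (2*j % n) ≡ 2*j [MOD n] := Nat.mod_modEq _ n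
          have h4 : (j - k) * 2 + 2*k = 2*j := by omega
          calc ((2*j % n) - (2*k % n)) + 2*k
              ≡ ((2*j % n) - (2*k % n)) + (2*k % n) [MOD n] := h1
          _ = 2*j % n := h2
          _ ≡ 2*j [MOD n] := h3
          _ = (j - k) * 2 + 2*k := h4.symm
        rw [pow_modeq hm hn hF β hβ _ _ hmodeq]
        rw [mul_pow, ← pow_mul]
      · have hc' : 2*k % n ∉ Pset (2*j % n) := by
          intro hcon
          obtain ⟨k1, hk1, hk1eq⟩ := Pset_rho_surj hm hn j (2*k % n) (hjn j hj) hcon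
          have : k = k1 := rho_inj hm hn k k1 hkn (by have := Pset_lt k1 j hk1; have := hjn j hj; omega) hk1eq
          exact hc (this ▸ hk1)
        rw [if_neg hc, if_neg hc']
        exact zero_pow two_ne_zero
  · -- evaluation
    intro x
    show c (x + β) - c x = ∑ k ∈ S, B k * x ^ k
    rw [hAeq (x + β), hAeq x, ← Finset.sum_sub_distrib]
    have e1 : ∀ j ∈ Sstar, A j * (x + β) ^ j - A j * x ^ j
        = ∑ k ∈ S, (if k ∈ Pset j then A j * β ^ (j - k) * x ^ k else 0) := by
      intro j hj
      rw [← mul_sub, expansion hm hF x β j, Finset.mul_sum]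
      rw [← Finset.sum_filter]
      have : S.filter (fun k => k ∈ Pset j) = Pset j := by
        ext k
        simp only [Finset.mem_filter]
        constructor
        · tauto
        · intro h
          exact ⟨hPsub j hj h, h⟩
      rw [this]
      apply Finset.sum_congr rfl
      intro k _
      ring
    rw [Finset.sum_congr rfl e1, Finset.sum_comm]
    apply Finset.sum_congr rfl
    intro k _
    rw [hB]
    simp only
    rw [Finset.sum_mul]
    apply Finset.sum_congr rfl
    intro j _
    by_cases h : k ∈ Pset j <;> simp [h]

end Codes

end Prop3Helpers

/-- Proposition 3: let `C` be an extended cyclic code with exponent set `S_C`, and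
let `S_A` be the exponent set of its cyclic derivative ascendant `A(C)`, the
extended cyclic code of largest dimension `X` such that `D(X) ⊆ C` (equivalently,
such that all the derivatives of codewords of `X` in all nonzero directions lie in
`C`; the dimension of an extended cyclic code is the size of its exponent set).
Then for every `0 ≤ s ≤ n-1`: `s ∈ S_A ↔ cc(P(s)) ⊆ S_C`. -/
theorem exponent_set_of_cyclicDA (m : ℕ) (hm : 0 < m)
    (n : ℕ) (hn : n = 2 ^ m - 1)
    {F : Type*} [Field F] [Fintype F] (hF : Fintype.card F = 2 ^ m)
    (S : Finset ℕ) (hS : IsExpSet n S)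
    (SA : Finset ℕ) (hSA : IsExpSet n SA)
    (hasc : ∀ β : F, β ≠ 0 →
      derivSet β (extCyclicCode n SA) ⊆ (extCyclicCode n S : Set (F → F)))
    (hmax : ∀ S' : Finset ℕ, IsExpSet n S' →
      (∀ β : F, β ≠ 0 →
        derivSet β (extCyclicCode n S') ⊆ (extCyclicCode n S : Set (F → F))) →
      S'.card ≤ SA.card) :
    ∀ s : ℕ, s < n → (s ∈ SA ↔ ccSet n m (Pset s) ⊆ S) := by
  classical
  intro s hsn
  set Sstar := (Finset.range n).filter (fun s => ccSet n m (Pset s) ⊆ S) with hSstar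
  have hSstarExp : IsExpSet n Sstar := Prop3Helpers.Sstar_expSet hm hn hS
  have hbwd := Prop3Helpers.bwd hm hn hF hS (F := F)
  have hcard : Sstar.card ≤ SA.card := hmax Sstar hSstarExp hbwd
  have hsub : SA ⊆ Sstar := by
    intro t ht
    refine Finset.mem_filter.mpr ⟨Finset.mem_range.mpr (hSA.1 t ht), ?_⟩
    intro u hu
    obtain ⟨k, hk, huk⟩ := Finset.mem_biUnion.mp hu
    have hkS : k ∈ S := Prop3Helpers.fwd hm hn hF hS hSA hasc t ht k hk
    exact Prop3Helpers.cycCoset_subset hm hn hS k hkS huk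
  have hEq : SA = Sstar := Finset.eq_of_subset_of_card_le hsub hcard
  rw [hEq, hSstar]
  simp [Finset.mem_filter, Finset.mem_range, hsn]
end

section
/- Proposition 4: Let C be a nontrivial extended cyclic code with exponent set S_C, and let k_A be the dimension of its cyclic derivative ascendant A(C). Then k_A ≤ Σ_{i=0}^{deg(S_C)+1} binom(m, i). -/
open Polynomial



lemma cov_iff_testBit (k j : ℕ) : k ||| j = j ↔ ∀ i, k.testBit i = true → j.testBit i = true := by
  constructor
  · intro h i hi
    have := congrArg (fun x => Nat.testBit x i) h
    simpa [Nat.testBit_or, hi] using this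
  · intro h
    apply Nat.eq_of_testBit_eq
    intro i
    rw [Nat.testBit_or]
    cases hk : k.testBit i
    · simp
    · simp [h i hk]

lemma odd_choose_iff : ∀ j k : ℕ, Odd (j.choose k) ↔ k ||| j = j := by
  haveI : Fact (Nat.Prime 2) := ⟨Nat.prime_two⟩
  intro j
  induction j using Nat.strong_induction_on with
  | _ j ih =>
    intro k
    rcases Nat.eq_zero_or_pos j with rfl | hpos
    · have : k ||| 0 = k := by simp
      rw [this]
      cases k with
      | zero => simp
      | succ k => simp [Nat.choose]
    · have hlucas := Choose.choose_modEq_choose_mod_mul_choose_div_nat (p := 2) (n := j) (k := k)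
      have hodd : Odd (j.choose k) ↔ Odd ((j % 2).choose (k % 2)) ∧ Odd ((j / 2).choose (k / 2)) := by
        rw [← Nat.odd_mul, Nat.odd_iff, Nat.odd_iff, Nat.ModEq] at *
        constructor
        · intro h; rw [← hlucas]; exact h
        · intro h; rw [hlucas]; exact h
      rw [hodd, ih (j / 2) (Nat.div_lt_self hpos one_lt_two) (k / 2),
        cov_iff_testBit, cov_iff_testBit]
      constructor
      · rintro ⟨h0, hrec⟩ i hi
        cases i with
        | zero =>
          rcases Nat.mod_two_eq_zero_or_one k with hk | hk <;>
            rcases Nat.mod_two_eq_zero_or_one j with hj | hj <;>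
            simp_all [Nat.testBit_zero, Nat.choose]
        | succ i =>
          rw [Nat.testBit_add_one] at hi ⊢
          exact hrec i hi
      · intro h
        refine ⟨?_, fun i hi => ?_⟩
        · have h0 := h 0
          rw [Nat.testBit_zero, Nat.testBit_zero] at h0
          rcases Nat.mod_two_eq_zero_or_one k with hk | hk <;>
            rcases Nat.mod_two_eq_zero_or_one j with hj | hj <;>
            rw [hk, hj] at h0 ⊢ <;> simp_all [Nat.choose]
        · rw [Nat.testBit_div_two] at hi ⊢
          exact h _ hi

/-- Proposition 4: let `C` be a nontrivial extended cyclic code with exponent set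
`S_C`, and let `k_A` be the dimension of its cyclic derivative ascendant `A(C)`,
the extended cyclic code of largest dimension `X` such that `D(X) ⊆ C`
(equivalently, such that all the derivatives of codewords of `X` in all nonzero
directions lie in `C`; the dimension of an extended cyclic code is the size of its
exponent set).  Then `k_A ≤ ∑_{i=0}^{deg(S_C) + 1} binom(m, i)`. -/
theorem dimension_of_cyclicDA (m : ℕ) (hm : 0 < m)
    (n : ℕ) (hn : n = 2 ^ m - 1)
    {F : Type*} [Field F] [Fintype F] (hF : Fintype.card F = 2 ^ m)
    (S : Finset ℕ) (hS : IsExpSet n S) (hnt : S ≠ {0})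
    (SA : Finset ℕ) (hSA : IsExpSet n SA)
    (hasc : ∀ β : F, β ≠ 0 →
      derivSet β (extCyclicCode n SA) ⊆ (extCyclicCode n S : Set (F → F)))
    (hmax : ∀ S' : Finset ℕ, IsExpSet n S' →
      (∀ β : F, β ≠ 0 →
        derivSet β (extCyclicCode n S') ⊆ (extCyclicCode n S : Set (F → F))) →
      S'.card ≤ SA.card) :
    SA.card ≤ ∑ i ∈ Finset.range (S.sup (wtm m) + 2), m.choose i := by
  classical
  set d := S.sup (wtm m) with hd
  have h2pow : (1:ℕ) ≤ 2 ^ m := Nat.one_le_two_pow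
  have hcard2 : (Fintype.card F : F) = 0 := FiniteField.cast_card_eq_zero F
  have htwo : (2 : F) = 0 := by
    rw [hF] at hcard2
    push_cast at hcard2
    exact (pow_eq_zero_iff hm.ne').mp hcard2
  have hncast : ∀ a : ℕ, (a : F) = if Odd a then 1 else 0 := by
    intro a
    induction a with
    | zero => simp
    | succ a ihp =>
      rw [Nat.cast_add, Nat.cast_one, ihp]
      by_cases h : Odd a
      · have : ¬ Odd (a + 1) := by simp [Nat.odd_add_one, h]
        simp [h, this, one_add_one_eq_two, htwo]
      · have : Odd (a + 1) := by simp [Nat.odd_add_one, h]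
        simp [h, this]
  have key : ∀ s ∈ SA, wtm m s ≤ d + 1 := by
    intro s hsSA
    by_contra hgt
    push_neg at hgt
    have hslt : s < n := hSA.1 s hsSA
    have hwtm0 : wtm m 0 = 0 := by simp [wtm]
    have hn1 : 1 < n := by
      by_contra hc
      have : s = 0 := by omega
      subst this
      omega
    have h2m : 2 ^ m = n + 1 := by omega
    have h2mod : 2 ^ m % n = 1 := by
      rw [h2m, Nat.add_mod_left]
      exact Nat.mod_eq_of_lt hn1
    have hmulmod : ∀ a b : ℕ, a * (b % n) % n = a * b % n := by
      intro a b
      conv_rhs => rw [Nat.mul_mod]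
      rw [Nat.mul_mod, Nat.mod_mod_of_dvd b dvd_rfl]
    have hpowmod : ∀ a : ℕ, 2 ^ a % n = 2 ^ (a % m) % n := by
      intro a
      conv_lhs => rw [← Nat.div_add_mod a m, pow_add, pow_mul]
      rw [Nat.mul_mod, Nat.pow_mod, h2mod, one_pow,
        Nat.mod_eq_of_lt hn1, one_mul, Nat.mod_mod_of_dvd _ dvd_rfl]
    set K := cycCoset n m s with hK
    have memK : ∀ t, t ∈ K ↔ ∃ a, t = 2 ^ a * s % n := by
      intro t
      rw [hK]
      unfold cycCoset
      simp only [Finset.mem_image, Finset.mem_range]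
      constructor
      · rintro ⟨a, _, rfl⟩; exact ⟨a, rfl⟩
      · rintro ⟨a, rfl⟩
        refine ⟨a % m, Nat.mod_lt a hm, ?_⟩
        rw [Nat.mul_mod, ← hpowmod a, ← Nat.mul_mod]
    have hsK : s ∈ K := (memK s).2 ⟨0, by simp [Nat.mod_eq_of_lt hslt]⟩
    have hKlt : ∀ j ∈ K, j < n := by
      intro j hj
      obtain ⟨a, rfl⟩ := (memK j).1 hj
      exact Nat.mod_lt _ (by omega)
    have hKmul : ∀ c j, j ∈ K → 2 ^ c * j % n ∈ K := by
      intro c j hj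
      obtain ⟨a, rfl⟩ := (memK j).1 hj
      refine (memK _).2 ⟨c + a, ?_⟩
      rw [hmulmod, ← mul_assoc, ← pow_add]
    have hKsub : K ⊆ SA := by
      intro j hj
      obtain ⟨a, rfl⟩ := (memK j).1 hj
      clear hj
      induction a with
      | zero => simpa [Nat.mod_eq_of_lt hslt] using hsSA
      | succ a iha =>
        have he : 2 ^ (a + 1) * s % n = 2 * (2 ^ a * s % n) % n := by
          rw [hmulmod, pow_succ, mul_comm (2 ^ a) 2, mul_assoc]
        rw [he]
        exact hSA.2 _ iha
    have hKdouble : ∀ j, j < n → (2 * j % n ∈ K ↔ j ∈ K) := by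
      intro j hjlt
      constructor
      · intro h
        have h2 : 2 ^ (m - 1) * (2 * j % n) % n ∈ K := hKmul (m - 1) _ h
        have he : 2 ^ (m - 1) * (2 * j % n) % n = j := by
          rw [hmulmod, ← mul_assoc, mul_comm (2 ^ (m - 1)) 2, ← pow_succ',
            Nat.sub_add_cancel hm, Nat.mul_mod, h2mod, one_mul,
            Nat.mod_mod_of_dvd _ dvd_rfl, Nat.mod_eq_of_lt hjlt]
        rwa [he] at h2
      · intro h
        have := hKmul 1 j h
        simpa [pow_one] using this
    -- choose a bit
    have hcardpos : 0 < ((Finset.range m).filter fun j => s.testBit j).card := by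
      have : wtm m s = ((Finset.range m).filter fun j => s.testBit j).card := rfl
      omega
    obtain ⟨b, hb⟩ := Finset.card_pos.mp hcardpos
    have hb' := Finset.mem_filter.mp hb
    have hbm : b < m := Finset.mem_range.mp hb'.1
    have hsb : s.testBit b = true := hb'.2
    set k := s ^^^ 2 ^ b with hkdef
    have hkbit : ∀ i, k.testBit i = if i = b then false else s.testBit i := by
      intro i
      rw [hkdef, Nat.testBit_xor, Nat.testBit_two_pow]
      by_cases h : i = b
      · subst h; simp [hsb]
      · simp [h, Ne.symm h]
    have hkcov : k ||| s = s := by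
      rw [cov_iff_testBit]
      intro i hi
      rw [hkbit i] at hi
      by_cases h : i = b
      · rw [if_pos h] at hi; exact absurd hi (by simp)
      · rwa [if_neg h] at hi
    have hkne : k ≠ s := by
      intro h
      have := hkbit b
      rw [h, if_pos rfl] at this
      rw [this] at hsb
      exact absurd hsb (by simp)
    have hcovle : ∀ j, k ||| j = j → k ≤ j := fun j h =>
      Nat.le_of_testBit ((cov_iff_testBit k j).1 h)
    have hkwt : wtm m k + 1 = wtm m s := by
      have hset : ((Finset.range m).filter fun j => k.testBit j)
          = ((Finset.range m).filter fun j => s.testBit j).erase b := by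
        ext i
        simp only [Finset.mem_erase, Finset.mem_filter, Finset.mem_range]
        rw [hkbit i]
        by_cases h : i = b
        · subst h; simp
        · simp [h]
      unfold wtm
      rw [hset, Finset.card_erase_of_mem hb]
      omega
    have hkS : k ∉ S := by
      intro hk
      have h1 : wtm m k ≤ d := Finset.le_sup hk
      omega
    -- the polynomial R
    set T : Finset ℕ := K.filter (fun j => k ||| j = j ∧ j ≠ k) with hT
    set R : F[X] := ∑ j ∈ T, X ^ (j - k) with hR
    have hsT : s ∈ T := Finset.mem_filter.2 ⟨hsK, hkcov, Ne.symm hkne⟩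
    have hks : k ≤ s := hcovle s hkcov
    have hRcoeff : R.coeff (s - k) = 1 := by
      rw [hR, finset_sum_coeff]
      have hterm : ∀ j ∈ T, (X ^ (j - k) : F[X]).coeff (s - k)
          = if j = s then 1 else 0 := by
        intro j hj
        obtain ⟨hjK, hjcov, hjne⟩ := Finset.mem_filter.1 hj
        have hkj : k ≤ j := hcovle j hjcov
        rw [coeff_X_pow]
        by_cases h : j = s
        · subst h; simp
        · rw [if_neg (by omega), if_neg h]
      rw [Finset.sum_congr rfl hterm, Finset.sum_ite_eq' T s (fun _ => (1:F)), if_pos hsT]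
    have hRne : R ≠ 0 := fun h => by rw [h] at hRcoeff; simp at hRcoeff
    have hRdeg : R.natDegree < 2 ^ m := by
      have h1 : R.natDegree ≤ n - 1 := by
        rw [hR]
        apply Polynomial.natDegree_sum_le_of_forall_le
        intro j hj
        have hjK := (Finset.mem_filter.1 hj).1
        have := hKlt j hjK
        rw [natDegree_X_pow]
        omega
      omega
    obtain ⟨β, hβR⟩ := Polynomial.exists_eval_ne_zero_of_natDegree_lt_card R hRne
      (by rw [Cardinal.mk_fintype, hF]; exact_mod_cast hRdeg)
    have hβ0 : β ≠ 0 := by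
      rintro rfl
      apply hβR
      rw [← Polynomial.coeff_zero_eq_eval_zero, hR, finset_sum_coeff]
      apply Finset.sum_eq_zero
      intro j hj
      obtain ⟨hjK, hjcov, hjne⟩ := Finset.mem_filter.1 hj
      have := hcovle j hjcov
      rw [coeff_X_pow, if_neg (by omega)]
    -- the codeword
    set A : ℕ → F := fun j => if j ∈ K then 1 else 0 with hA
    have hcmem : (fun x : F => ∑ j ∈ SA, A j * x ^ j) ∈ extCyclicCode n SA (F := F) := by
      refine ⟨A, ?_, fun x => rfl⟩
      intro j hj
      have hjlt := hSA.1 j hj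
      rw [hA]
      simp only []
      by_cases h : j ∈ K
      · rw [if_pos ((hKdouble j hjlt).2 h), if_pos h, one_pow]
      · rw [if_neg (fun hh => h ((hKdouble j hjlt).1 hh)), if_neg h]
        ring
    obtain ⟨B, hBsq, hBeq⟩ := hasc β hβ0 ⟨_, hcmem, rfl⟩
    have hcsum : ∀ x : F, (∑ j ∈ SA, A j * x ^ j) = ∑ j ∈ K, x ^ j := by
      intro x
      rw [hA]
      simp only [ite_mul, one_mul, zero_mul]
      rw [Finset.sum_ite_mem, Finset.inter_eq_right.mpr hKsub]
    set P : F[X] := ∑ j ∈ K, ((X + C β) ^ j - X ^ j) with hP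
    set Q : F[X] := ∑ j ∈ S, C (B j) * X ^ j with hQ
    have hPdeg : P.natDegree ≤ n - 1 := by
      rw [hP]
      apply Polynomial.natDegree_sum_le_of_forall_le
      intro j hj
      have hjn := hKlt j hj
      refine le_trans (natDegree_sub_le _ _) ?_
      rw [natDegree_X_pow]
      have h1 : ((X + C β : F[X]) ^ j).natDegree ≤ j := by
        refine le_trans (natDegree_pow_le) ?_
        rw [natDegree_X_add_C]
        omega
      simp only [max_le_iff]
      omega
    have hQdeg : Q.natDegree ≤ n - 1 := by
      rw [hQ]
      apply Polynomial.natDegree_sum_le_of_forall_le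
      intro j hj
      have hjn := hS.1 j hj
      refine le_trans (natDegree_C_mul_le _ _) ?_
      rw [natDegree_X_pow]
      omega
    have hPQ : P = Q := by
      have heval : ∀ x : F, (P - Q).eval x = 0 := by
        intro x
        rw [eval_sub, sub_eq_zero, hP, hQ, Polynomial.eval_finset_sum,
          Polynomial.eval_finset_sum]
        simp only [eval_sub, eval_pow, eval_add, eval_X, eval_C, eval_mul]
        rw [Finset.sum_sub_distrib, ← hcsum (x + β), ← hcsum x]
        exact hBeq x
      have hz := Polynomial.eq_zero_of_forall_eval_zero_of_natDegree_lt_card (P - Q) heval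
        (by
          rw [Cardinal.mk_fintype, hF]
          have := Polynomial.natDegree_sub_le P Q
          have : (P - Q).natDegree < 2 ^ m := by omega
          exact_mod_cast this)
      exact sub_eq_zero.mp hz
    have hQk : Q.coeff k = 0 := by
      rw [hQ, finset_sum_coeff]
      apply Finset.sum_eq_zero
      intro j hj
      rw [coeff_C_mul, coeff_X_pow, if_neg (fun h : k = j => hkS (by rw [h]; exact hj)), mul_zero]
    have hPk : P.coeff k = R.eval β := by
      rw [hP, finset_sum_coeff, hR, Polynomial.eval_finset_sum]
      simp only [eval_pow, eval_X]
      rw [hT, Finset.sum_filter]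
      apply Finset.sum_congr rfl
      intro j hjK
      rw [coeff_sub, coeff_X_add_C_pow, coeff_X_pow, hncast (j.choose k)]
      by_cases h1 : k ||| j = j
      · have hodd : Odd (j.choose k) := (odd_choose_iff j k).2 h1
        by_cases h2 : j = k
        · subst h2
          simp [hodd]
        · rw [if_pos hodd, if_neg (fun hh : k = j => h2 hh.symm), if_pos ⟨h1, h2⟩]
          ring
      · have heven : ¬ Odd (j.choose k) := fun ho => h1 ((odd_choose_iff j k).1 ho)
        have h2 : ¬ k = j := by
          rintro rfl
          exact h1 (by simp)
        rw [if_neg heven, if_neg h2, if_neg (by tauto)]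
        ring
    apply hβR
    rw [← hPk, hPQ, hQk]
  -- counting
  set φ : ℕ → Finset ℕ := fun s => (Finset.range m).filter fun j => s.testBit j with hφ
  have hslt2m : ∀ s ∈ SA, s < 2 ^ m := fun s hs => lt_of_lt_of_le (hSA.1 s hs) (by omega)
  have hinj : Set.InjOn φ SA := by
    intro s1 h1 s2 h2 hphi
    apply Nat.eq_of_testBit_eq
    intro i
    by_cases hi : i < m
    · have := Finset.ext_iff.mp hphi i
      simp only [hφ, Finset.mem_filter, Finset.mem_range] at this
      cases hb1 : s1.testBit i <;> cases hb2 : s2.testBit i <;> simp_all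
    · have l1 : s1 < 2 ^ i :=
        lt_of_lt_of_le (hslt2m s1 h1) (Nat.pow_le_pow_right (by norm_num) (le_of_not_gt hi))
      have l2 : s2 < 2 ^ i :=
        lt_of_lt_of_le (hslt2m s2 h2) (Nat.pow_le_pow_right (by norm_num) (le_of_not_gt hi))
      rw [Nat.testBit_lt_two_pow l1, Nat.testBit_lt_two_pow l2]
  have hsubT : SA.image φ ⊆ (Finset.range m).powerset.filter fun t => t.card ≤ d + 1 := by
    intro t ht
    obtain ⟨s, hs, rfl⟩ := Finset.mem_image.mp ht
    rw [Finset.mem_filter, Finset.mem_powerset]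
    exact ⟨Finset.filter_subset _ _, key s hs⟩
  have hsubU : ((Finset.range m).powerset.filter fun t => t.card ≤ d + 1) ⊆
      (Finset.range (d + 2)).biUnion fun i => (Finset.range m).powersetCard i := by
    intro t ht
    rw [Finset.mem_filter, Finset.mem_powerset] at ht
    exact Finset.mem_biUnion.mpr ⟨t.card, Finset.mem_range.mpr (by omega),
      Finset.mem_powersetCard.mpr ⟨ht.1, rfl⟩⟩
  calc SA.card = (SA.image φ).card := (Finset.card_image_of_injOn hinj).symm
    _ ≤ ((Finset.range m).powerset.filter fun t => t.card ≤ d + 1).card :=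
        Finset.card_le_card hsubT
    _ ≤ ((Finset.range (d + 2)).biUnion fun i => (Finset.range m).powersetCard i).card :=
        Finset.card_le_card hsubU
    _ ≤ ∑ i ∈ Finset.range (d + 2), ((Finset.range m).powersetCard i).card :=
        Finset.card_biUnion_le
    _ = ∑ i ∈ Finset.range (d + 2), m.choose i := by
        simp [Finset.card_powersetCard]
end

section
/- Proposition 5: Let C be a nontrivial extended cyclic code with minimum Hamming distance d, and let d_A be the minimum Hamming distance of its cyclic derivative ascendant A(C). Then d_A ≥ d/2. -/
-- arithmetic: powers reduce mod m
lemma pow_mul_mod (m n : ℕ) (hm : 0 < m) (hn : n = 2 ^ m - 1) (s a : ℕ) :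
    2 ^ a * s % n = 2 ^ (a % m) * s % n := by
  have h1 : (2:ℕ) ^ m ≡ 1 [MOD n] := by
    have : n ∣ 2 ^ m - 1 := hn ▸ dvd_refl n
    exact ((Nat.modEq_iff_dvd' (Nat.one_le_two_pow)).2 this).symm
  have h2 : (2:ℕ) ^ a ≡ 2 ^ (a % m) [MOD n] := by
    conv_lhs => rw [← Nat.div_add_mod a m, pow_add, pow_mul]
    calc ((2:ℕ)^m) ^ (a / m) * 2 ^ (a % m)
        ≡ 1 ^ (a/m) * 2 ^ (a % m) [MOD n] := (h1.pow _).mul_right _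
      _ = 2 ^ (a % m) := by ring
  exact h2.mul_right s

lemma mem_cycCoset_iff (m n : ℕ) (hm : 0 < m) (hn : n = 2 ^ m - 1) (s j : ℕ) :
    j ∈ cycCoset n m s ↔ ∃ a : ℕ, j = 2 ^ a * s % n := by
  constructor
  · rintro h
    simp only [cycCoset, Finset.mem_image, Finset.mem_range] at h
    obtain ⟨a, _, rfl⟩ := h
    exact ⟨a, rfl⟩
  · rintro ⟨a, rfl⟩
    simp only [cycCoset, Finset.mem_image, Finset.mem_range]
    exact ⟨a % m, Nat.mod_lt _ hm, (pow_mul_mod m n hm hn s a).symm⟩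

lemma hn_pos (m n : ℕ) (hm : 0 < m) (hn : n = 2 ^ m - 1) : 0 < n := by
  subst hn
  have : (2:ℕ)^1 ≤ 2^m := Nat.pow_le_pow_right (by norm_num) hm
  omega

-- closure: cycCoset is closed under doubling mod n, and conversely
lemma cycCoset_double (m n : ℕ) (hm : 0 < m) (hn : n = 2 ^ m - 1) (s j : ℕ)
    (hj : j ∈ cycCoset n m s) : 2 * j % n ∈ cycCoset n m s := by
  rw [mem_cycCoset_iff m n hm hn] at hj ⊢
  obtain ⟨a, rfl⟩ := hj
  refine ⟨a + 1, ?_⟩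
  have h := (Nat.mod_modEq (2 ^ a * s) n).mul_left 2
  rw [Nat.ModEq] at h
  rw [h, pow_succ]
  congr 1
  ring

example : True := trivial

lemma cycCoset_half (m n : ℕ) (hm : 0 < m) (hn : n = 2 ^ m - 1) (s j : ℕ)
    (hjn : j < n) (hj : 2 * j % n ∈ cycCoset n m s) : j ∈ cycCoset n m s := by
  rw [mem_cycCoset_iff m n hm hn] at hj ⊢
  obtain ⟨a, ha⟩ := hj
  refine ⟨m - 1 + a, ?_⟩
  have h1 : 2 ^ (m - 1) * (2 * j) % n = 2 ^ (m - 1 + a) * s % n := by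
    have h := (Nat.mod_modEq (2 * j) n).mul_left (2 ^ (m - 1))
    rw [Nat.ModEq] at h
    have h2 := (Nat.mod_modEq (2 ^ a * s) n).mul_left (2 ^ (m - 1))
    rw [Nat.ModEq] at h2
    rw [← h, ha, h2, pow_add, mul_assoc]
  have h3 : 2 ^ (m - 1) * (2 * j) = 2 ^ m * j := by
    rw [← mul_assoc, mul_comm (2 ^ (m-1)) 2, ← pow_succ']
    congr 2
    omega
  have h4 : 2 ^ m * j % n = j % n := by
    have h5 : (2:ℕ) ^ m ≡ 1 [MOD n] := by
      have : n ∣ 2 ^ m - 1 := hn ▸ dvd_refl n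
      exact ((Nat.modEq_iff_dvd' (Nat.one_le_two_pow)).2 this).symm
    have := h5.mul_right j
    rw [Nat.ModEq] at this
    rw [this, one_mul]
  rw [h3, h4, Nat.mod_eq_of_lt hjn] at h1
  exact h1

lemma cycCoset_subset (m n : ℕ) (hm : 0 < m) (hn : n = 2 ^ m - 1)
    (S : Finset ℕ) (hS : IsExpSet n S) (s : ℕ) (hs : s ∈ S) :
    cycCoset n m s ⊆ S := by
  intro j hj
  rw [mem_cycCoset_iff m n hm hn] at hj
  obtain ⟨a, rfl⟩ := hj
  induction a with
  | zero =>
    simpa [Nat.mod_eq_of_lt (hS.1 s hs)] using hs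
  | succ k ih =>
    have h := (Nat.mod_modEq (2 ^ k * s) n).mul_left 2
    rw [Nat.ModEq] at h
    have : 2 ^ (k + 1) * s % n = 2 * (2 ^ k * s % n) % n := by
      rw [h, pow_succ]; congr 1; ring
    rw [this]
    exact hS.2 _ ih

lemma zero_mem_extCyclicCode {F : Type*} [Field F] (n : ℕ) (S : Finset ℕ) :
    (0 : F → F) ∈ extCyclicCode n S := by
  refine ⟨0, fun j _ => by simp, fun x => by simp⟩

lemma exists_ne_zero_codeword (m n : ℕ) (hm : 0 < m) (hn : n = 2 ^ m - 1)
    {F : Type*} [Field F] [Fintype F] [DecidableEq F] (hF : Fintype.card F = 2 ^ m)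
    (S : Finset ℕ) (hS : IsExpSet n S) (hne : S.Nonempty) :
    ∃ c ∈ (extCyclicCode n S : Set (F → F)), c ≠ 0 := by
  obtain ⟨s, hs⟩ := hne
  set T : Finset ℕ := cycCoset n m s with hT
  have hsT : s ∈ T := by
    rw [hT, mem_cycCoset_iff m n hm hn]
    exact ⟨0, by simp [Nat.mod_eq_of_lt (hS.1 s hs)]⟩
  set p : Polynomial F := ∑ j ∈ T, Polynomial.X ^ j with hp
  have hp0 : p ≠ 0 := by
    intro h
    have : p.coeff s = 1 := by
      rw [hp, Polynomial.finset_sum_coeff]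
      rw [Finset.sum_eq_single s]
      · simp
      · intro b hb hbs; simp only [Polynomial.coeff_X_pow]; simp [Ne.symm hbs]
      · intro h; exact absurd hsT h
    rw [h] at this
    simp at this
  have hdeg : p.natDegree < Fintype.card F := by
    have : p.natDegree ≤ n - 1 := by
      rw [hp]
      refine Polynomial.natDegree_sum_le_of_forall_le _ _ fun j hj => ?_
      have hjn : j < n := by
        rw [hT, mem_cycCoset_iff m n hm hn] at hj
        obtain ⟨a, rfl⟩ := hj
        exact Nat.mod_lt _ (hn_pos m n hm hn)
      calc (Polynomial.X ^ j : Polynomial F).natDegree ≤ j :=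
            le_of_eq (Polynomial.natDegree_X_pow j)
        _ ≤ n - 1 := by omega
    have hn1 : n - 1 < 2 ^ m := by
      have := hn_pos m n hm hn
      omega
    rw [hF]; omega
  obtain ⟨r, hr⟩ := p.exists_eval_ne_zero_of_natDegree_lt_card hp0
    (by rw [Cardinal.mk_fintype]; exact_mod_cast hdeg)
  classical
  set A : ℕ → F := fun j => if j ∈ T then 1 else 0 with hA
  refine ⟨fun x => ∑ j ∈ S, A j * x ^ j, ⟨A, fun j hj => ?_, fun x => rfl⟩, ?_⟩
  · by_cases h : j ∈ T
    · have h2 : 2 * j % n ∈ T := cycCoset_double m n hm hn s j h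
      simp [hA, h, h2]
    · have h2 : 2 * j % n ∉ T := fun hc => h (cycCoset_half m n hm hn s j (hS.1 j hj) hc)
      simp [hA, h, h2]
  · intro hc
    apply hr
    have hTS : T ⊆ S := cycCoset_subset m n hm hn S hS s hs
    have : ∑ j ∈ S, A j * r ^ j = p.eval r := by
      rw [hp, Polynomial.eval_finset_sum]
      rw [← Finset.sum_subset hTS]
      · apply Finset.sum_congr rfl
        intro j hj
        simp [hA, hj]
      · intro j _ hj
        simp [hA, hj]
    rw [← this]
    simpa using congrFun hc r

lemma deriv_norm_le {F : Type*} [Field F] [Fintype F] [DecidableEq F] (β : F) (c : F → F) :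
    hammingNorm (fun x => c (x + β) - c x) ≤ 2 * hammingNorm c := by
  classical
  have h1 : ({x | (fun x => c (x + β) - c x) x ≠ 0} : Finset F) ⊆
      ({x | c (x + β) ≠ 0} : Finset F) ∪ ({x | c x ≠ 0} : Finset F) := by
    intro x hx
    simp only [Finset.mem_filter, Finset.mem_univ, true_and] at hx ⊢
    rw [Finset.mem_union]
    simp only [Finset.mem_filter, Finset.mem_univ, true_and]
    by_contra h
    push_neg at h
    rw [h.1, h.2, sub_zero] at hx
    exact hx rfl
  have h2 : ({x | c (x + β) ≠ 0} : Finset F).card = hammingNorm c := by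
    unfold hammingNorm
    apply Finset.card_bij (fun x _ => x + β)
    · intro x hx
      simpa using (by simpa using hx : c (x + β) ≠ 0)
    · intro a _ b _ h
      exact add_right_cancel h
    · intro y hy
      refine ⟨y - β, by simpa using (by simpa using hy : c y ≠ 0), by ring⟩
  calc hammingNorm (fun x => c (x + β) - c x)
      ≤ (({x | c (x + β) ≠ 0} : Finset F) ∪ ({x | c x ≠ 0} : Finset F)).card :=
        Finset.card_le_card h1
    _ ≤ ({x | c (x + β) ≠ 0} : Finset F).card + ({x | c x ≠ 0} : Finset F).card :=
        Finset.card_union_le _ _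
    _ = 2 * hammingNorm c := by rw [h2]; unfold hammingNorm; ring

/-- Proposition 5: let `C` be a nontrivial extended cyclic code with minimum
Hamming distance `d`, and let `d_A` be the minimum Hamming distance of its cyclic
derivative ascendant `A(C)`, the extended cyclic code of largest dimension `X`
such that `D(X) ⊆ C` (equivalently, such that all the derivatives of codewords of
`X` in all nonzero directions lie in `C`).  Then `d_A ≥ d/2`, i.e. `d ≤ 2·d_A`. -/
theorem distance_of_cyclicDA (m : ℕ) (hm : 0 < m)
    (n : ℕ) (hn : n = 2 ^ m - 1)
    {F : Type*} [Field F] [Fintype F] [DecidableEq F] (hF : Fintype.card F = 2 ^ m)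
    (S : Finset ℕ) (hS : IsExpSet n S) (hnt : S ≠ {0})
    (SA : Finset ℕ) (hSA : IsExpSet n SA)
    (hasc : ∀ β : F, β ≠ 0 →
      derivSet β (extCyclicCode n SA) ⊆ (extCyclicCode n S : Set (F → F)))
    (hmax : ∀ S' : Finset ℕ, IsExpSet n S' →
      (∀ β : F, β ≠ 0 →
        derivSet β (extCyclicCode n S') ⊆ (extCyclicCode n S : Set (F → F))) →
      S'.card ≤ SA.card) :
    minDist (extCyclicCode n S : Set (F → F))
      ≤ 2 * minDist (extCyclicCode n SA : Set (F → F)) := by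
    classical
  have hnpos : 0 < n := hn_pos m n hm hn
  -- SA is nonempty
  have hSAne : SA.Nonempty := by
    have h0 : IsExpSet n ({0} : Finset ℕ) := by
      constructor
      · intro j hj; simp at hj; omega
      · intro j hj; simp at hj; simp [hj]
    have hsub : ∀ β : F, β ≠ 0 →
        derivSet β (extCyclicCode n ({0} : Finset ℕ)) ⊆ (extCyclicCode n S : Set (F → F)) := by
      intro β hβ d hd
      obtain ⟨c, ⟨A, _, hA2⟩, rfl⟩ := hd
      refine ⟨0, fun j _ => by simp, fun x => ?_⟩
      simp only [hA2]
      simp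
    have h1 := hmax {0} h0 hsub
    rw [Finset.card_singleton] at h1
    exact Finset.card_pos.mp h1
  -- a minimal-weight nonzero codeword of the ascendant
  obtain ⟨c0, hc0mem, hc0ne⟩ :=
    exists_ne_zero_codeword m n hm hn hF SA hSA hSAne
  set WA := { w | ∃ c ∈ (extCyclicCode n SA : Set (F → F)), c ≠ (0 : F → F) ∧ hammingNorm c = w }
    with hWA
  have hWAne : WA.Nonempty := ⟨hammingNorm c0, c0, hc0mem, hc0ne, rfl⟩
  have hmemA : minDist (extCyclicCode n SA : Set (F → F)) ∈ WA := Nat.sInf_mem hWAne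
  obtain ⟨c, hcmem, hcne, hcw⟩ := hmemA
  by_cases hconst : ∀ β : F, β ≠ 0 → (fun x => c (x + β) - c x) = (0 : F → F)
  · -- c is a nonzero constant, so its weight is the full length
    have hcc : ∀ y : F, c y = c 0 := by
      intro y
      by_cases hy : y = 0
      · rw [hy]
      · have := congrFun (hconst y hy) 0
        simp only [Pi.zero_apply, zero_add] at this
        exact sub_eq_zero.mp this
    have hc00 : c 0 ≠ 0 := by
      intro h
      apply hcne
      funext y
      rw [hcc y, h]; rfl
    have hwfull : hammingNorm c = Fintype.card F := by
      unfold hammingNorm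
      rw [Finset.filter_true_of_mem, Finset.card_univ]
      intro x _
      rw [hcc x]
      exact hc00
    rw [← hcw, hwfull, hF]
    -- bound the min distance of C by the length
    by_cases hSne : S.Nonempty
    · obtain ⟨c1, hc1mem, hc1ne⟩ := exists_ne_zero_codeword m n hm hn hF S hS hSne
      have hle : minDist (extCyclicCode n S : Set (F → F)) ≤ hammingNorm c1 :=
        Nat.sInf_le ⟨c1, hc1mem, hc1ne, rfl⟩
      have : hammingNorm c1 ≤ Fintype.card F := hammingNorm_le_card_fintype
      rw [hF] at this
      omega
    · have hempty : { w | ∃ c ∈ (extCyclicCode n S : Set (F → F)),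
          c ≠ (0 : F → F) ∧ hammingNorm c = w } = ∅ := by
        ext w
        simp only [Set.mem_setOf_eq, Set.mem_empty_iff_false, iff_false, not_exists]
        rintro c' ⟨⟨A, _, hA2⟩, hc'ne, _⟩
        apply hc'ne
        funext x
        rw [hA2 x, Finset.not_nonempty_iff_eq_empty.mp hSne]
        simp
      unfold minDist
      rw [hempty, Nat.sInf_empty]
      positivity
  · push_neg at hconst
    obtain ⟨β, hβ, hd⟩ := hconst
    have hdmem : (fun x => c (x + β) - c x) ∈ (extCyclicCode n S : Set (F → F)) :=
      hasc β hβ ⟨c, hcmem, rfl⟩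
    have hle : minDist (extCyclicCode n S : Set (F → F)) ≤
        hammingNorm (fun x => c (x + β) - c x) :=
      Nat.sInf_le ⟨_, hdmem, hd, rfl⟩
    calc minDist (extCyclicCode n S : Set (F → F))
        ≤ hammingNorm (fun x => c (x + β) - c x) := hle
      _ ≤ 2 * hammingNorm c := deriv_norm_le β c
      _ = 2 * minDist (extCyclicCode n SA : Set (F → F)) := by rw [hcw]
end

section
/- Theorem 2: Let C be an extended cyclic code, and let β_1 = α^{b_1} and β_2 = α^{b_2} be nonzero elements of F. Then for every A ∈ C, the (b_1 − b_2)-cyclic shift of the codeword [Δ_{β_1}A(α^i)]_{i∈I} of D_{β_1}(C) equals the codeword [Δ_{β_2}Ã(α^i)]_{i∈I} of D_{β_2}(C), where Ã(z) := A(β_2^{-1}β_1 z) ∈ C. Consequently, the coordinate permutation sending position i to position i + (b_1 − b_2) mod n (fixing position ∞) maps D_{β_1}(C) bijectively onto D_{β_2}(C); i.e., the minimal derivative descendants of C in different directions are equivalent codes. -/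

lemma code_scale {F : Type*} [Field F] (n : ℕ) (hn : 0 < n) (S : Finset ℕ) (γ : F)
    (hγ : γ ^ n = 1) (c : F → F) (hc : c ∈ (extCyclicCode n S : Set (F → F))) :
    (fun x : F => c (γ * x)) ∈ (extCyclicCode n S : Set (F → F)) := by
  obtain ⟨A, hA1, hA2⟩ := hc
  refine ⟨fun j => A j * γ ^ j, ?_, ?_⟩
  · intro j hj
    have hp : γ ^ (2 * j % n) = γ ^ (2 * j) := by
      conv_rhs => rw [← Nat.mod_add_div (2 * j) n, pow_add, pow_mul, hγ, one_pow, mul_one]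
    simp only []
    rw [hA1 j hj, hp]; ring
  · intro x
    simp only []
    rw [hA2 (γ * x)]
    exact Finset.sum_congr rfl fun j _ => by rw [mul_pow]; ring

/-- Theorem 2: let `C` be an extended cyclic code and let `β₁ = α^{b₁}`,
`β₂ = α^{b₂}` be nonzero elements of `F` (`α` a primitive element).  For every
codeword `A ∈ C`, the `(b₁ - b₂)`-cyclic shift of the codeword
`[Δ_{β₁}A(α^i)]_{i∈I}` of `D_{β₁}(C)` — with codewords written as functions on
`F` (index `i ↦ α^i`, `α^∞ = 0`), the `b`-cyclic shift of `c` is `x ↦ c (α^b x)` —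
equals the codeword `[Δ_{β₂}Ã(α^i)]_{i∈I}` of `D_{β₂}(C)`, where
`Ã(z) := A(β₂⁻¹β₁ z) ∈ C`.  Consequently, the corresponding coordinate
permutation maps `D_{β₁}(C)` bijectively onto `D_{β₂}(C)`: the minimal derivative
descendants of `C` in different directions are equivalent codes. -/
theorem minimalDDs_equivalent (m : ℕ) (hm : 0 < m)
    (n : ℕ) (hn : n = 2 ^ m - 1)
    {F : Type*} [Field F] [Fintype F] (hF : Fintype.card F = 2 ^ m)
    (α : F) (hα : orderOf α = 2 ^ m - 1)
    (S : Finset ℕ) (hS : IsExpSet n S) (b₁ b₂ : ℕ) :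
    (∀ c : F → F, c ∈ (extCyclicCode n S : Set (F → F)) →
      (fun x : F => c (α ^ b₁ * (α ^ b₂)⁻¹ * x)) ∈ (extCyclicCode n S : Set (F → F)) ∧
      (fun x : F => (fun y : F => c (y + α ^ b₁) - c y) (α ^ b₁ * (α ^ b₂)⁻¹ * x))
        = fun x : F =>
            (fun y : F => c (α ^ b₁ * (α ^ b₂)⁻¹ * y)) (x + α ^ b₂)
              - (fun y : F => c (α ^ b₁ * (α ^ b₂)⁻¹ * y)) x) ∧
    Set.BijOn (fun d : F → F => fun x : F => d (α ^ b₁ * (α ^ b₂)⁻¹ * x))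
      (derivSet (α ^ b₁) (extCyclicCode n S))
      (derivSet (α ^ b₂) (extCyclicCode n S)) := by
  have hnpos : 0 < n := by
    rw [hn]; have : 1 < 2 ^ m := Nat.one_lt_two_pow hm.ne'; omega
  have hαn : α ^ n = 1 := by rw [hn, ← hα]; exact pow_orderOf_eq_one α
  have hα0 : α ≠ 0 := by
    intro h
    have h2 : (0 : F) ^ n = 1 := by rw [← h]; exact hαn
    rw [zero_pow hnpos.ne'] at h2
    exact zero_ne_one h2
  set γ : F := α ^ b₁ * (α ^ b₂)⁻¹ with hγdef
  have hb2 : (α : F) ^ b₂ ≠ 0 := pow_ne_zero _ hα0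
  have hγ0 : γ ≠ 0 := mul_ne_zero (pow_ne_zero _ hα0) (inv_ne_zero hb2)
  have hγn : γ ^ n = 1 := by
    rw [hγdef, mul_pow, inv_pow, ← pow_mul, ← pow_mul, mul_comm b₁ n, mul_comm b₂ n,
      pow_mul, pow_mul, hαn, one_pow, one_pow, inv_one, mul_one]
  have hγβ : γ * α ^ b₂ = α ^ b₁ := by
    rw [hγdef, mul_assoc, inv_mul_cancel₀ hb2, mul_one]
  have hγβ' : γ⁻¹ * α ^ b₁ = α ^ b₂ := by
    rw [← hγβ]; field_simp
  refine ⟨?_, ?_, ?_, ?_⟩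
  · intro c hc
    refine ⟨code_scale n hnpos S γ hγn c hc, ?_⟩
    funext x
    simp only [mul_add, hγβ]
  · -- MapsTo
    rintro d ⟨c, hc, rfl⟩
    exact ⟨fun y => c (γ * y), code_scale n hnpos S γ hγn c hc,
      by funext x; simp only [mul_add, hγβ]⟩
  · -- InjOn
    intro d _ e _ h
    funext x
    have := congrFun h (γ⁻¹ * x)
    simpa [mul_inv_cancel_left₀ hγ0] using this
  · -- SurjOn
    rintro e ⟨c, hc, rfl⟩
    have hγin : (γ⁻¹) ^ n = 1 := by rw [inv_pow, hγn, inv_one]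
    refine ⟨fun y => (fun z => c (γ⁻¹ * z)) (y + α ^ b₁) - (fun z => c (γ⁻¹ * z)) y,
      ⟨fun z => c (γ⁻¹ * z), code_scale n hnpos S γ⁻¹ hγin c hc, rfl⟩, ?_⟩
    funext x
    simp only [mul_add, inv_mul_cancel_left₀ hγ0, hγβ']
end
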